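/- arXiv:2102.01899 — 7 statements merged into one kernel-verified Lean document; each statement's English description precedes it below -/
import Mathlib

section
/- In any pricing equilibrium of the morning-commute corridor network, bottleneck 1 (the most downstream bottleneck) is non-false: there exists a time t ∈ 𝒯 with p_1(t) > 0. -/
open MeasureTheory Finset Set
open scoped Classical

noncomputable section

/-- Basic corridor-network primitives: `N ≥ 1` bottlenecks, rush hour `[0,T]`,
capacities `μ`, demands `Q`, free-flow times `c`, and a continuous, strictly
quasi-convex schedule-delay function `s` with minimum `0` at `td ∈ (0,T)`. -/
def CorridorNet (N : ℕ) (T td : ℝ) (μ Q c : ℕ → ℝ) (s : ℝ → ℝ) : Prop :=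
  1 ≤ N ∧ 0 < T ∧ td ∈ Set.Ioo (0:ℝ) T ∧
  (∀ i ∈ Finset.Icc 1 N, 0 < μ i ∧ 0 < Q i ∧ 0 ≤ c i) ∧
  ContinuousOn s (Set.Icc 0 T) ∧ (∀ t ∈ Set.Icc (0:ℝ) T, 0 ≤ s t) ∧ s td = 0 ∧
  (∀ a ∈ Set.Icc (0:ℝ) T, ∀ b ∈ Set.Icc (0:ℝ) T, a ≠ b →
    ∀ l ∈ Set.Ioo (0:ℝ) 1, s (l * a + (1 - l) * b) < max (s a) (s b))

/-- Pricing equilibrium: bounded measurable nonnegative flows `q` and prices `p`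
with constants `ρ`, satisfying (E1), (E2), (E3). -/
def IsPricingEq (N : ℕ) (T : ℝ) (μ Q c : ℕ → ℝ) (s : ℝ → ℝ)
    (q p : ℕ → ℝ → ℝ) (ρ : ℕ → ℝ) : Prop :=
  (∀ i ∈ Finset.Icc 1 N, Measurable (q i) ∧ Measurable (p i)) ∧
  (∀ i ∈ Finset.Icc 1 N, ∃ M : ℝ, ∀ t ∈ Set.Icc (0:ℝ) T, q i t ≤ M ∧ p i t ≤ M) ∧
  (∀ i ∈ Finset.Icc 1 N, ∀ t ∈ Set.Icc (0:ℝ) T, 0 ≤ q i t ∧ 0 ≤ p i t) ∧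
  (∀ i ∈ Finset.Icc 1 N, ∀ t ∈ Set.Icc (0:ℝ) T,
    ρ i ≤ s t + c i + ∑ j ∈ Finset.Icc 1 i, p j t ∧
    (0 < q i t → s t + c i + ∑ j ∈ Finset.Icc 1 i, p j t = ρ i)) ∧
  (∀ i ∈ Finset.Icc 1 N, ∀ t ∈ Set.Icc (0:ℝ) T,
    (∑ j ∈ Finset.Icc i N, q j t) ≤ μ i ∧
    (0 < p i t → (∑ j ∈ Finset.Icc i N, q j t) = μ i)) ∧
  (∀ i ∈ Finset.Icc 1 N, ∫ t in (0:ℝ)..T, q i t = Q i)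

/-- In any pricing equilibrium of the morning-commute corridor
network, bottleneck 1 is non-false. -/
theorem stmt0 (N : ℕ) (T td : ℝ) (μ Q c : ℕ → ℝ) (s : ℝ → ℝ)
    (q p : ℕ → ℝ → ℝ) (ρ : ℕ → ℝ)
    (hnet : CorridorNet N T td μ Q c s)
    (heq : IsPricingEq N T μ Q c s q p ρ)
    :
    ∃ t ∈ Set.Icc (0:ℝ) T, 0 < p 1 t := by
  obtain ⟨hN, hT, htd, hpos, hcont, hs0, hstd, hqc⟩ := hnet
  obtain ⟨hmeas, hbdd, hnn, hE1, hE2, hE3⟩ := heq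
  have h1N : (1:ℕ) ∈ Finset.Icc 1 N := Finset.mem_Icc.mpr ⟨le_refl 1, hN⟩
  by_contra hcon
  push_neg at hcon
  have hp0 : ∀ t ∈ Set.Icc (0:ℝ) T, p 1 t = 0 := fun t ht =>
    le_antisymm (hcon t ht) (hnn 1 h1N t ht).2
  set v := ρ 1 - c 1 with hv
  have hA : ∀ t ∈ Set.Icc (0:ℝ) T, 0 < q 1 t → s t = v := by
    intro t ht hq
    have h := (hE1 1 h1N t ht).2 hq
    simp only [Finset.Icc_self, Finset.sum_singleton, hp0 t ht] at h
    rw [hv]; linarith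
  have key : ∀ x ∈ Set.Icc (0:ℝ) T, ∀ y ∈ Set.Icc (0:ℝ) T, ∀ z ∈ Set.Icc (0:ℝ) T,
      x < y → y < z → s x = v → s y = v → s z = v → False := by
    intro x hx y hy z hz hxy hyz hsx hsy hsz
    have hxz : x < z := hxy.trans hyz
    have hne : z - x ≠ 0 := by intro h; linarith [sub_eq_zero.mp h]
    have hl : (z - y) / (z - x) ∈ Set.Ioo (0:ℝ) 1 := by
      constructor
      · exact div_pos (by linarith) (by linarith)
      · rw [div_lt_one (by linarith)]; linarith
    have h := hqc x hx z hz (ne_of_lt hxz) _ hl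
    have heqy : (z - y)/(z - x) * x + (1 - (z - y)/(z - x)) * z = y := by
      field_simp
      ring
    rw [heqy, hsx, hsz, hsy, max_self] at h
    exact lt_irrefl v h
  have tri : ∀ x ∈ Set.Icc (0:ℝ) T, ∀ y ∈ Set.Icc (0:ℝ) T, ∀ z ∈ Set.Icc (0:ℝ) T,
      x ≠ y → y ≠ z → x ≠ z → s x = v → s y = v → s z = v → False := by
    intro x hx y hy z hz hxy hyz hxz hsx hsy hsz
    rcases lt_trichotomy x y with h1 | h1 | h1
    · rcases lt_trichotomy y z with h2 | h2 | h2
      · exact key x hx y hy z hz h1 h2 hsx hsy hsz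
      · exact hyz h2
      · rcases lt_trichotomy x z with h3 | h3 | h3
        · exact key x hx z hz y hy h3 h2 hsx hsz hsy
        · exact hxz h3
        · exact key z hz x hx y hy h3 h1 hsz hsx hsy
    · exact hxy h1
    · rcases lt_trichotomy x z with h2 | h2 | h2
      · exact key y hy x hx z hz h1 h2 hsy hsx hsz
      · exact hxz h2
      · rcases lt_trichotomy y z with h3 | h3 | h3
        · exact key y hy z hz x hx h3 h2 hsy hsz hsx
        · exact hyz h3
        · exact key z hz y hy x hx h3 h1 hsz hsy hsx
  have hsub : ∃ a b : ℝ, ∀ t ∈ Set.Icc (0:ℝ) T, 0 < q 1 t → t = a ∨ t = b := by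
    by_cases hA1 : ∃ a ∈ Set.Icc (0:ℝ) T, 0 < q 1 a
    · obtain ⟨a, ha, hqa⟩ := hA1
      by_cases hA2 : ∃ b ∈ Set.Icc (0:ℝ) T, 0 < q 1 b ∧ b ≠ a
      · obtain ⟨b, hb, hqb, hba⟩ := hA2
        refine ⟨a, b, ?_⟩
        intro t ht hqt
        by_contra h
        push_neg at h
        obtain ⟨hta, htb⟩ := h
        exact tri t ht a ha b hb hta (Ne.symm hba) htb
          (hA t ht hqt) (hA a ha hqa) (hA b hb hqb)
      · push_neg at hA2
        exact ⟨a, a, fun t ht hqt => Or.inl (hA2 t ht hqt)⟩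
    · exact ⟨0, 0, fun t ht hqt => absurd ⟨t, ht, hqt⟩ hA1⟩
  obtain ⟨a, b, hab⟩ := hsub
  have hT0 : (0:ℝ) ≤ T := le_of_lt hT
  have hnull : (volume : Measure ℝ) ({a, b} : Set ℝ) = 0 :=
    (Set.Finite.insert a (Set.finite_singleton b)).measure_zero _
  have hzero : ∫ t in (0:ℝ)..T, q 1 t = ∫ t in (0:ℝ)..T, (0:ℝ) := by
    apply intervalIntegral.integral_congr_ae
    have hmem : ∀ᵐ t ∂(volume : Measure ℝ), t ∉ ({a, b} : Set ℝ) :=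
      measure_eq_zero_iff_ae_notMem.mp hnull
    filter_upwards [hmem] with t htab htIoc
    have ht : t ∈ Set.Icc (0:ℝ) T := by
      rw [Set.uIoc_of_le hT0] at htIoc
      exact ⟨le_of_lt htIoc.1, htIoc.2⟩
    by_contra hne
    have hq : 0 < q 1 t := lt_of_le_of_ne (hnn 1 h1N t ht).1 (Ne.symm hne)
    rcases hab t ht hq with rfl | rfl
    · exact htab (by simp)
    · exact htab (by simp)
  rw [hE3 1 h1N] at hzero
  simp only [intervalIntegral.integral_zero] at hzero
  have := (hpos 1 h1N).2.1
  linarith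
end
end

section
/- In a pricing equilibrium of the morning-commute corridor network, if bottleneck i with 2 ≤ i ≤ N is non-false, then μ_i < μ_{i−1}. -/
open MeasureTheory Finset Set
open scoped Classical

noncomputable section

/-- `[a,b]` is the smallest closed interval containing `{t ∈ [0,T] : 0 < f t}`. -/
def IsWindow (T : ℝ) (f : ℝ → ℝ) (a b : ℝ) : Prop :=
  a ≤ b ∧
  {t | t ∈ Set.Icc (0:ℝ) T ∧ 0 < f t} ⊆ Set.Icc a b ∧
  ∀ a' b' : ℝ, {t | t ∈ Set.Icc (0:ℝ) T ∧ 0 < f t} ⊆ Set.Icc a' b' →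
    Set.Icc a b ⊆ Set.Icc a' b'

/-- Bottleneck `i` is non-false: its price is positive at some time. -/
def NonFalse (T : ℝ) (p : ℕ → ℝ → ℝ) (i : ℕ) : Prop :=
  ∃ t ∈ Set.Icc (0:ℝ) T, 0 < p i t

/-- if bottleneck `i` with `2 ≤ i ≤ N` is non-false then
`μ i < μ (i-1)`. -/
theorem stmt1 (N : ℕ) (T td : ℝ) (μ Q c : ℕ → ℝ) (s : ℝ → ℝ)
    (q p : ℕ → ℝ → ℝ) (ρ : ℕ → ℝ) (tm tp : ℕ → ℝ)
    (hnet : CorridorNet N T td μ Q c s)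
    (heq : IsPricingEq N T μ Q c s q p ρ)
    (hwin : ∀ i ∈ Finset.Icc 1 N, IsWindow T (q i) (tm i) (tp i))
    (hreg : ∀ i ∈ Finset.Icc 1 N, s (tm i) = ρ i - c i ∧ s (tp i) = ρ i - c i)
    (i : ℕ) (hi2 : 2 ≤ i) (hiN : i ≤ N)
    (hnf : NonFalse T p i) :
    μ i < μ (i - 1) := by
  classical
  obtain ⟨hN1, hT, htd, hpos, -⟩ := hnet
  obtain ⟨hmeas, hbdd, hnn, hE1, hE2, hE3⟩ := heq
  by_contra hcon
  push_neg at hcon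
  obtain ⟨ts, hts, hpits⟩ := hnf
  have hi1 : 1 ≤ i := by omega
  have hiI : i ∈ Finset.Icc 1 N := Finset.mem_Icc.mpr ⟨hi1, hiN⟩
  have him1I : i - 1 ∈ Finset.Icc 1 N := Finset.mem_Icc.mpr ⟨by omega, by omega⟩
  have hμi : 0 < μ i := (hpos i hiI).1
  -- bottleneck i binds at time ts
  have hbind : ∑ m ∈ Finset.Icc i N, q m ts = μ i := (hE2 i hiI ts hts).2 hpits
  -- there is a minimal j0 ∈ [i,N] with q j0 ts > 0
  have hex : ∃ j, (i ≤ j ∧ j ≤ N) ∧ 0 < q j ts := by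
    by_contra hno
    push_neg at hno
    have hz : ∑ m ∈ Finset.Icc i N, q m ts = 0 := by
      apply Finset.sum_eq_zero
      intro m hm
      rw [Finset.mem_Icc] at hm
      have h1 := (hnn m (Finset.mem_Icc.mpr ⟨le_trans hi1 hm.1, hm.2⟩) ts hts).1
      have h2 := hno m hm
      linarith
    rw [hz] at hbind; linarith
  set j0 := Nat.find hex with hj0def
  obtain ⟨⟨hij0, hj0N⟩, hqj0⟩ := Nat.find_spec hex
  have hj0I : j0 ∈ Finset.Icc 1 N := Finset.mem_Icc.mpr ⟨le_trans hi1 hij0, hj0N⟩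
  have hzero : ∀ m, i ≤ m → m < j0 → q m ts = 0 := by
    intro m h1 h2
    have hmN : m ≤ N := le_trans (le_of_lt h2) hj0N
    have hmin := Nat.find_min hex h2
    have hnnm := (hnn m (Finset.mem_Icc.mpr ⟨le_trans hi1 h1, hmN⟩) ts hts).1
    by_contra hne
    exact hmin ⟨⟨h1, hmN⟩, lt_of_le_of_ne hnnm (Ne.symm hne)⟩
  -- all capacities between i and j0 are ≥ μ i
  have hμk : ∀ k, i ≤ k → k ≤ j0 → μ i ≤ μ k := by
    intro k hik hkj0
    have hsub : Finset.Icc k N ⊆ Finset.Icc i N := Finset.Icc_subset_Icc hik le_rfl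
    have hsum : ∑ m ∈ Finset.Icc i N, q m ts = ∑ m ∈ Finset.Icc k N, q m ts := by
      refine (Finset.sum_subset hsub ?_).symm
      intro x hx hnx
      rw [Finset.mem_Icc] at hx
      rw [Finset.mem_Icc] at hnx
      push_neg at hnx
      have hxk : x < k := by
        by_contra h
        push_neg at h
        exact absurd hx.2 (not_le_of_gt (hnx h))
      exact hzero x hx.1 (lt_of_lt_of_le hxk hkj0)
    have hkI : k ∈ Finset.Icc 1 N :=
      Finset.mem_Icc.mpr ⟨le_trans hi1 hik, le_trans hkj0 hj0N⟩
    have hcap := (hE2 k hkI ts hts).1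
    rw [← hsum, hbind] at hcap
    exact hcap
  -- there is τ with q (i-1) τ > 0
  have him1Q : 0 < Q (i - 1) := (hpos _ him1I).2.1
  have hexτ : ∃ τ ∈ Set.Icc (0:ℝ) T, 0 < q (i - 1) τ := by
    by_contra hno
    push_neg at hno
    have hzero' : Set.EqOn (q (i - 1)) (fun _ => (0:ℝ)) (Set.uIcc 0 T) := by
      intro t ht
      rw [Set.uIcc_of_le (le_of_lt hT)] at ht
      have h1 := (hnn (i - 1) him1I t ht).1
      have h2 := hno t ht
      exact le_antisymm h2 h1
    have hint := hE3 (i - 1) him1I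
    rw [intervalIntegral.integral_congr hzero'] at hint
    simp at hint
    linarith
  obtain ⟨τ, hτ, hqτ⟩ := hexτ
  -- prices p k τ = 0 for all k ∈ [i, j0]
  have hpkτ : ∀ k, i ≤ k → k ≤ j0 → p k τ = 0 := by
    intro k hik hkj0
    have hkI : k ∈ Finset.Icc 1 N :=
      Finset.mem_Icc.mpr ⟨le_trans hi1 hik, le_trans hkj0 hj0N⟩
    have hsub : insert (i - 1) (Finset.Icc k N) ⊆ Finset.Icc (i - 1) N := by
      intro x hx
      rcases Finset.mem_insert.mp hx with h | h
      · subst h; rw [Finset.mem_Icc]; omega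
      · rw [Finset.mem_Icc] at h ⊢; omega
    have hnonneg : ∀ x ∈ Finset.Icc (i - 1) N, 0 ≤ q x τ := by
      intro x hx
      rw [Finset.mem_Icc] at hx
      exact (hnn x (Finset.mem_Icc.mpr ⟨by omega, hx.2⟩) τ hτ).1
    have hle := Finset.sum_le_sum_of_subset_of_nonneg hsub
      (fun x hx _ => hnonneg x hx)
    rw [Finset.sum_insert (by rw [Finset.mem_Icc]; push_neg; intro h; omega)] at hle
    have hcap := (hE2 (i - 1) him1I τ hτ).1
    have hμik := hμk k hik hkj0
    have hlt : ∑ m ∈ Finset.Icc k N, q m τ < μ k := by linarith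
    by_contra hne
    have hp0 := (hnn k hkI τ hτ).2
    have hppos : 0 < p k τ := lt_of_le_of_ne hp0 (Ne.symm hne)
    have := (hE2 k hkI τ hτ).2 hppos
    linarith
  -- E1 equality for i-1 at τ
  have hE1eqτ : s τ + c (i - 1) + ∑ l ∈ Finset.Icc 1 (i - 1), p l τ = ρ (i - 1) :=
    (hE1 (i - 1) him1I τ hτ).2 hqτ
  -- the price sum up to j0 at τ collapses to the sum up to i-1
  have hsump : ∑ l ∈ Finset.Icc 1 j0, p l τ = ∑ l ∈ Finset.Icc 1 (i - 1), p l τ := by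
    refine (Finset.sum_subset (Finset.Icc_subset_Icc le_rfl (by omega)) ?_).symm
    intro x hx hnx
    rw [Finset.mem_Icc] at hx
    rw [Finset.mem_Icc] at hnx
    push_neg at hnx
    exact hpkτ x (by omega) hx.2
  have h7 : ρ j0 ≤ s τ + c j0 + ∑ l ∈ Finset.Icc 1 (i - 1), p l τ := by
    have h := (hE1 j0 hj0I τ hτ).1
    rw [hsump] at h
    exact h
  -- E1 equality for j0 at ts, E1 inequality for i-1 at ts
  have h8 : s ts + c j0 + ∑ l ∈ Finset.Icc 1 j0, p l ts = ρ j0 :=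
    (hE1 j0 hj0I ts hts).2 hqj0
  have h9 : ρ (i - 1) ≤ s ts + c (i - 1) + ∑ l ∈ Finset.Icc 1 (i - 1), p l ts :=
    (hE1 (i - 1) him1I ts hts).1
  have h10 : ∑ l ∈ Finset.Icc 1 (i - 1), p l ts + p i ts
      ≤ ∑ l ∈ Finset.Icc 1 j0, p l ts := by
    have hsub : insert i (Finset.Icc 1 (i - 1)) ⊆ Finset.Icc 1 j0 := by
      intro x hx
      rcases Finset.mem_insert.mp hx with h | h
      · subst h; rw [Finset.mem_Icc]; omega
      · rw [Finset.mem_Icc] at h ⊢; omega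
    have hnonneg : ∀ x ∈ Finset.Icc 1 j0, 0 ≤ p x ts := by
      intro x hx
      rw [Finset.mem_Icc] at hx
      exact (hnn x (Finset.mem_Icc.mpr ⟨hx.1, le_trans hx.2 hj0N⟩) ts hts).2
    have hle := Finset.sum_le_sum_of_subset_of_nonneg hsub
      (fun x hx _ => hnonneg x hx)
    rw [Finset.sum_insert (by rw [Finset.mem_Icc]; push_neg; intro h; omega)] at hle
    linarith
  linarith
end
end

section
/- In a pricing equilibrium of the morning-commute corridor network, if bottleneck i is non-false, then p_i(t) > 0 for every t in the open interval (t_i^-, t_i^+), where [t_i^-, t_i^+] is the arrival-time window of origin i. -/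
open MeasureTheory Finset Set
open scoped Classical

noncomputable section

/-- if bottleneck `i` is non-false then `p i t > 0` on the open
arrival-time window `(t_i^-, t_i^+)`. -/
theorem stmt2 (N : ℕ) (T td : ℝ) (μ Q c : ℕ → ℝ) (s : ℝ → ℝ)
    (q p : ℕ → ℝ → ℝ) (ρ : ℕ → ℝ) (tm tp : ℕ → ℝ)
    (hnet : CorridorNet N T td μ Q c s)
    (heq : IsPricingEq N T μ Q c s q p ρ)
    (hwin : ∀ i ∈ Finset.Icc 1 N, IsWindow T (q i) (tm i) (tp i))
    (hreg : ∀ i ∈ Finset.Icc 1 N, s (tm i) = ρ i - c i ∧ s (tp i) = ρ i - c i)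
    (i : ℕ) (hi : i ∈ Finset.Icc 1 N)
    (hnf : NonFalse T p i) :
    ∀ t ∈ Set.Ioo (tm i) (tp i), 0 < p i t := by
  classical
  obtain ⟨hN, hT, _htd, hpos, _hscont, _hsnn, _hstd, hsqc⟩ := hnet
  obtain ⟨_hmeas, _hbdd, hnn, hE1, hE2, hE3⟩ := heq
  have hi' := Finset.mem_Icc.mp hi
  obtain ⟨hi1, hiN⟩ := hi'
  have hmem : ∀ j, 1 ≤ j → j ≤ N → j ∈ Finset.Icc 1 N :=
    fun j h1 h2 => Finset.mem_Icc.mpr ⟨h1, h2⟩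
  have hqnn : ∀ j, 1 ≤ j → j ≤ N → ∀ t, t ∈ Set.Icc (0:ℝ) T → 0 ≤ q j t :=
    fun j h1 h2 t ht => (hnn j (hmem j h1 h2) t ht).1
  have hpnn : ∀ j, 1 ≤ j → j ≤ N → ∀ t, t ∈ Set.Icc (0:ℝ) T → 0 ≤ p j t :=
    fun j h1 h2 t ht => (hnn j (hmem j h1 h2) t ht).2
  have hE1ge : ∀ j, 1 ≤ j → j ≤ N → ∀ t, t ∈ Set.Icc (0:ℝ) T →
      (ρ j - c j) - s t ≤ ∑ k ∈ Finset.Icc 1 j, p k t := by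
    intro j h1 h2 t ht
    have := (hE1 j (hmem j h1 h2) t ht).1
    linarith
  have hE1eq : ∀ j, 1 ≤ j → j ≤ N → ∀ t, t ∈ Set.Icc (0:ℝ) T → 0 < q j t →
      ∑ k ∈ Finset.Icc 1 j, p k t = (ρ j - c j) - s t := by
    intro j h1 h2 t ht hq
    have := (hE1 j (hmem j h1 h2) t ht).2 hq
    linarith
  have hcap : ∀ j, 1 ≤ j → j ≤ N → ∀ t, t ∈ Set.Icc (0:ℝ) T →
      ∑ l ∈ Finset.Icc j N, q l t ≤ μ j :=
    fun j h1 h2 t ht => (hE2 j (hmem j h1 h2) t ht).1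
  have hbind : ∀ j, 1 ≤ j → j ≤ N → ∀ t, t ∈ Set.Icc (0:ℝ) T → 0 < p j t →
      ∑ l ∈ Finset.Icc j N, q l t = μ j :=
    fun j h1 h2 t ht hp => (hE2 j (hmem j h1 h2) t ht).2 hp
  -- every origin has a support point
  have hsupp : ∀ j, 1 ≤ j → j ≤ N → ∃ t, t ∈ Set.Icc (0:ℝ) T ∧ 0 < q j t := by
    intro j h1 h2
    by_contra hcon
    push_neg at hcon
    have hz : Set.EqOn (q j) (fun _ => (0:ℝ)) (Set.uIcc 0 T) := by
      intro t ht
      rw [Set.uIcc_of_le hT.le] at ht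
      exact le_antisymm (hcon t ht) (hqnn j h1 h2 t ht)
    have hzero : ∫ t in (0:ℝ)..T, q j t = 0 := by
      rw [intervalIntegral.integral_congr hz]
      simp
    have hQ := hE3 j (hmem j h1 h2)
    have hQpos := (hpos j (hmem j h1 h2)).2.1
    rw [hQ] at hzero
    linarith
  -- partial sums of prices are monotone in the index
  have hτmono : ∀ a l t, t ∈ Set.Icc (0:ℝ) T → a ≤ l → l ≤ N →
      ∑ k ∈ Finset.Icc 1 a, p k t ≤ ∑ k ∈ Finset.Icc 1 l, p k t := by
    intro a l t ht hal hlN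
    apply Finset.sum_le_sum_of_subset_of_nonneg
      (Finset.Icc_subset_Icc le_rfl hal)
    intro k hk _
    have hk' := Finset.mem_Icc.mp hk
    exact hpnn k hk'.1 (le_trans hk'.2 hlN) t ht
  have hτle : ∀ a m l t, t ∈ Set.Icc (0:ℝ) T → a < m → m ≤ l → l ≤ N →
      (∑ k ∈ Finset.Icc 1 a, p k t) + p m t ≤ ∑ k ∈ Finset.Icc 1 l, p k t := by
    intro a m l t ht ham hml hlN
    have hnotmem : m ∉ Finset.Icc 1 a := by
      simp only [Finset.mem_Icc, not_and]
      omega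
    have hsub : insert m (Finset.Icc 1 a) ⊆ Finset.Icc 1 l := by
      intro k hk
      rcases Finset.mem_insert.mp hk with rfl | hk'
      · exact Finset.mem_Icc.mpr ⟨by omega, hml⟩
      · have := Finset.mem_Icc.mp hk'
        exact Finset.mem_Icc.mpr ⟨this.1, by omega⟩
    calc (∑ k ∈ Finset.Icc 1 a, p k t) + p m t
        = ∑ k ∈ insert m (Finset.Icc 1 a), p k t := by
          rw [Finset.sum_insert hnotmem]; ring
      _ ≤ ∑ k ∈ Finset.Icc 1 l, p k t := by
          apply Finset.sum_le_sum_of_subset_of_nonneg hsub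
          intro k hk _
          have hk' := Finset.mem_Icc.mp hk
          exact hpnn k hk'.1 (le_trans hk'.2 hlN) t ht
  -- σ monotone
  have hσmono : ∀ a b, 1 ≤ a → a ≤ b → b ≤ N → ρ a - c a ≤ ρ b - c b := by
    intro a b h1 hab
    induction b, hab using Nat.le_induction with
    | base => intro _; exact le_refl _
    | succ n hn ih =>
      intro hn1N
      have hnN : n ≤ N := by omega
      have ha_n := ih hnN
      obtain ⟨t, ht, hq⟩ := hsupp (n+1) (by omega) hn1N
      have h1' := hE1eq (n+1) (by omega) hn1N t ht hq
      have h2' := hE1ge n (by omega) hnN t ht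
      have h3' := hτmono n (n+1) t ht (by omega) hn1N
      linarith
  -- key comparison: a binding price pushes σ of flowing origins up
  have hkey : ∀ jj m l t, 1 ≤ jj → jj < m → m ≤ l → l ≤ N → t ∈ Set.Icc (0:ℝ) T →
      0 < p m t → 0 < q l t → (ρ jj - c jj) + p m t ≤ ρ l - c l := by
    intro jj m l t h1 hjm hml hlN ht hpm hql
    have he := hE1eq l (by omega) hlN t ht hql
    have hg := hE1ge jj h1 (by omega) t ht
    have hins := hτle jj m l t ht hjm hml hlN
    linarith
  -- gap lemma: a flowing origin below a higher-σ index forces a positive price in between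
  have hgap : ∀ a b t, 1 ≤ a → a < b → b ≤ N → t ∈ Set.Icc (0:ℝ) T → 0 < q a t →
      ρ a - c a < ρ b - c b → ∃ m, a < m ∧ m ≤ b ∧ 0 < p m t := by
    intro a b t h1 hab hbN ht hq hσab
    have haN : a ≤ N := by omega
    have he := hE1eq a h1 haN t ht hq
    have hg := hE1ge b (by omega) hbN t ht
    have hsub : Finset.Icc 1 a ⊆ Finset.Icc 1 b :=
      Finset.Icc_subset_Icc le_rfl (by omega)
    have hsd := Finset.sum_sdiff (f := fun k => p k t) hsub
    by_contra hcon
    push_neg at hcon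
    have hnp : ∑ k ∈ Finset.Icc 1 b \ Finset.Icc 1 a, p k t ≤ 0 := by
      apply Finset.sum_nonpos
      intro k hk
      have hk' := Finset.mem_sdiff.mp hk
      have hk1 := Finset.mem_Icc.mp hk'.1
      have hak : a < k := by
        by_contra h
        push_neg at h
        exact hk'.2 (Finset.mem_Icc.mpr ⟨hk1.1, h⟩)
      exact hcon k hak hk1.2
    linarith
  -- step lemma: such a positive price in between has strictly smaller capacity
  have hstep : ∀ a b t, 1 ≤ a → a < b → b ≤ N → t ∈ Set.Icc (0:ℝ) T → 0 < q a t →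
      ρ a - c a < ρ b - c b → ∃ m, a < m ∧ m ≤ b ∧ 0 < p m t ∧ μ m < μ a := by
    intro a b t h1 hab hbN ht hq hσab
    obtain ⟨m, ham, hmb, hpm⟩ := hgap a b t h1 hab hbN ht hq hσab
    have hmN : m ≤ N := le_trans hmb hbN
    have hb := hbind m (by omega) hmN t ht hpm
    have hnotm : a ∉ Finset.Icc m N := by
      simp only [Finset.mem_Icc, not_and]
      omega
    have hsub : insert a (Finset.Icc m N) ⊆ Finset.Icc a N := by
      intro k hk
      rcases Finset.mem_insert.mp hk with rfl | hk'
      · exact Finset.mem_Icc.mpr ⟨le_refl _, by omega⟩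
      · have := Finset.mem_Icc.mp hk'
        exact Finset.mem_Icc.mpr ⟨by omega, this.2⟩
    have hins : ∑ l ∈ insert a (Finset.Icc m N), q l t
        = q a t + ∑ l ∈ Finset.Icc m N, q l t := Finset.sum_insert hnotm
    have hle : ∑ l ∈ insert a (Finset.Icc m N), q l t ≤ ∑ l ∈ Finset.Icc a N, q l t := by
      apply Finset.sum_le_sum_of_subset_of_nonneg hsub
      intro k hk _
      have hk' := Finset.mem_Icc.mp hk
      exact hqnn k (by omega) hk'.2 t ht
    have hcapa := hcap a h1 (by omega) t ht
    exact ⟨m, ham, hmb, hpm, by linarith⟩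
  -- unpack non-falseness
  obtain ⟨th, hthT, hpith⟩ := hnf
  have hbindi := hbind i hi1 hiN th hthT hpith
  have hμipos := (hpos i (hmem i hi1 hiN)).1
  have hexl : ∃ l, i ≤ l ∧ l ≤ N ∧ 0 < q l th := by
    by_contra hcon
    push_neg at hcon
    have hle : ∑ l ∈ Finset.Icc i N, q l th ≤ 0 := by
      apply Finset.sum_nonpos
      intro k hk
      have hk' := Finset.mem_Icc.mp hk
      exact hcon k hk'.1 hk'.2
    rw [hbindi] at hle
    linarith
  -- Lemma 1: σ j < σ i for all 1 ≤ j < i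
  have hL1 : ∀ j, 1 ≤ j → j < i → ρ j - c j < ρ i - c i := by
    intro j hj1 hji
    by_contra hcon
    push_neg at hcon
    obtain ⟨l0, hil0, hl0N, hql0⟩ := hexl
    have hσl0 : ρ i - c i < ρ l0 - c l0 := by
      have := hkey j i l0 th hj1 hji hil0 hl0N hthT hpith hql0
      linarith
    set E := (Finset.Icc 1 N).filter (fun l => ρ i - c i < ρ l - c l) with hE
    have hEne : E.Nonempty :=
      ⟨l0, Finset.mem_filter.mpr ⟨hmem l0 (by omega) hl0N, hσl0⟩⟩
    set i1 := E.min' hEne with hi1def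
    have hi1mem := E.min'_mem hEne
    have hi1E := Finset.mem_filter.mp hi1mem
    have hi1N : i1 ≤ N := (Finset.mem_Icc.mp hi1E.1).2
    have hσi1 : ρ i - c i < ρ i1 - c i1 := hi1E.2
    have hii1 : i < i1 := by
      by_contra h
      push_neg at h
      have := hσmono i1 i (Finset.mem_Icc.mp hi1E.1).1 h hiN
      linarith
    have hblock : ∀ m, i ≤ m → m < i1 → ρ m - c m = ρ i - c i := by
      intro m him hmi1
      have hmN : m ≤ N := by omega
      have hge := hσmono i m hi1 him hmN
      have hlt : ¬ (ρ i - c i < ρ m - c m) := by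
        intro hlt'
        have hmE : m ∈ E := Finset.mem_filter.mpr ⟨hmem m (by omega) hmN, hlt'⟩
        have hle2 : i1 ≤ m := E.min'_le m hmE
        omega
      linarith
    set S' := (Finset.Ico i i1).filter (fun m => ∃ t ∈ Set.Icc (0:ℝ) T, 0 < p m t) with hS'
    have hS'ne : S'.Nonempty :=
      ⟨i, Finset.mem_filter.mpr ⟨Finset.mem_Ico.mpr ⟨le_refl _, hii1⟩, ⟨th, hthT, hpith⟩⟩⟩
    set m0 := S'.max' hS'ne with hm0def
    have hm0f := Finset.mem_filter.mp (S'.max'_mem hS'ne)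
    have hm0Ico := Finset.mem_Ico.mp hm0f.1
    have him0 : i ≤ m0 := hm0Ico.1
    have hm0i1 : m0 < i1 := hm0Ico.2
    obtain ⟨t, htT, hpm0⟩ := hm0f.2
    have hm0N : m0 ≤ N := by omega
    have h1m0 : 1 ≤ m0 := by omega
    -- Step A: μ m0 ≤ μ i1
    have hbm0 := hbind m0 h1m0 hm0N t htT hpm0
    have hvan : ∀ l ∈ Finset.Icc m0 N, l ∉ Finset.Icc i1 N → q l t = 0 := by
      intro l hl hnl
      have hlm := Finset.mem_Icc.mp hl
      have hli1 : l < i1 := by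
        by_contra h
        push_neg at h
        exact hnl (Finset.mem_Icc.mpr ⟨h, hlm.2⟩)
      by_contra hqz
      have hqpos : 0 < q l t :=
        lt_of_le_of_ne (hqnn l (by omega) hlm.2 t htT) (Ne.symm hqz)
      have hk := hkey j m0 l t hj1 (by omega) hlm.1 hlm.2 htT hpm0 hqpos
      have hσl : ρ i - c i < ρ l - c l := by linarith
      have hlE : l ∈ E := Finset.mem_filter.mpr ⟨hmem l (by omega) hlm.2, hσl⟩
      have hle3 : i1 ≤ l := E.min'_le l hlE
      omega
    have hsumeq : ∑ l ∈ Finset.Icc i1 N, q l t = ∑ l ∈ Finset.Icc m0 N, q l t :=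
      Finset.sum_subset (Finset.Icc_subset_Icc (by omega) le_rfl) hvan
    have hμm0 : μ m0 ≤ μ i1 := by
      have := hcap i1 (by omega) hi1N t htT
      linarith
    -- Step B: descend
    obtain ⟨t', ht'T, hqm0⟩ := hsupp m0 h1m0 hm0N
    have hσm0 : ρ m0 - c m0 = ρ i - c i := hblock m0 him0 hm0i1
    obtain ⟨m', hm0m', hm'i1, hpm', hμm'⟩ :=
      hstep m0 i1 t' h1m0 hm0i1 hi1N ht'T hqm0 (by linarith)
    have hm'lt : m' < i1 := by
      rcases lt_or_eq_of_le hm'i1 with h | h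
      · exact h
      · exfalso; rw [h] at hμm'; linarith
    have hm'S' : m' ∈ S' :=
      Finset.mem_filter.mpr ⟨Finset.mem_Ico.mpr ⟨by omega, hm'lt⟩, ⟨t', ht'T, hpm'⟩⟩
    have : m' ≤ m0 := S'.le_max' m' hm'S'
    omega
  -- main argument
  intro t0 ht0
  obtain ⟨hwab, hwsub, hwmin⟩ := hwin i (hmem i hi1 hiN)
  have hwIcc : Set.Icc (tm i) (tp i) ⊆ Set.Icc 0 T := hwmin 0 T (fun t ht => ht.1)
  have htmT : tm i ∈ Set.Icc (0:ℝ) T := hwIcc ⟨le_refl _, hwab⟩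
  have htpT : tp i ∈ Set.Icc (0:ℝ) T := hwIcc ⟨hwab, le_refl _⟩
  have ht0T : t0 ∈ Set.Icc (0:ℝ) T := hwIcc ⟨ht0.1.le, ht0.2.le⟩
  obtain ⟨hrm, hrp⟩ := hreg i (hmem i hi1 hiN)
  have htmtp : tm i < tp i := lt_trans ht0.1 ht0.2
  have hslt : s t0 < ρ i - c i := by
    set lam := (tp i - t0) / (tp i - tm i) with hlam
    have hd : 0 < tp i - tm i := by linarith
    have hl0 : 0 < lam := div_pos (by linarith [ht0.2]) hd
    have hl1 : lam < 1 := by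
      rw [hlam, div_lt_one hd]
      linarith [ht0.1]
    have hmul : lam * (tp i - tm i) = tp i - t0 := div_mul_cancel₀ _ hd.ne'
    have hrep : lam * tm i + (1 - lam) * tp i = t0 := by
      have h2 : lam * tm i + (1 - lam) * tp i = tp i - lam * (tp i - tm i) := by ring
      rw [h2, hmul]; ring
    have hq := hsqc (tm i) htmT (tp i) htpT (ne_of_lt htmtp) lam ⟨hl0, hl1⟩
    rw [hrep, hrm, hrp, max_self] at hq
    exact hq
  by_contra hcon
  have hpi0 : p i t0 = 0 := le_antisymm (not_lt.mp hcon) (hpnn i hi1 hiN t0 ht0T)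
  have hτi := hE1ge i hi1 hiN t0 ht0T
  have hsumpos : 0 < ∑ k ∈ Finset.Icc 1 i, p k t0 := by linarith
  set S0 := (Finset.Icc 1 i).filter (fun m => 0 < p m t0) with hS0
  have hS0ne : S0.Nonempty := by
    by_contra hne
    rw [Finset.not_nonempty_iff_eq_empty] at hne
    have hle : ∑ k ∈ Finset.Icc 1 i, p k t0 ≤ 0 := by
      apply Finset.sum_nonpos
      intro k hk
      by_contra h
      push_neg at h
      have hkS : k ∈ S0 := Finset.mem_filter.mpr ⟨hk, h⟩
      rw [hne] at hkS
      exact absurd hkS (Finset.notMem_empty k)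
    linarith
  set j1 := S0.max' hS0ne with hj1def
  have hj1mem := Finset.mem_filter.mp (S0.max'_mem hS0ne)
  have hj1Icc := Finset.mem_Icc.mp hj1mem.1
  have hj1ge1 : 1 ≤ j1 := hj1Icc.1
  have hj1lei : j1 ≤ i := hj1Icc.2
  have hpj1 : 0 < p j1 t0 := hj1mem.2
  have hj1i : j1 < i := by
    rcases lt_or_eq_of_le hj1lei with h | h
    · exact h
    · exfalso
      rw [h] at hpj1
      linarith
  have hzero : ∀ m, j1 < m → m ≤ i → p m t0 = 0 := by
    intro m hm1 hm2
    by_contra h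
    have hm0 : 0 < p m t0 :=
      lt_of_le_of_ne (hpnn m (by omega) (by omega) t0 ht0T) (Ne.symm h)
    have hmS : m ∈ S0 := Finset.mem_filter.mpr ⟨Finset.mem_Icc.mpr ⟨by omega, hm2⟩, hm0⟩
    have : m ≤ j1 := S0.le_max' m hmS
    omega
  have hql0 : ∀ l, j1 ≤ l → l < i → q l t0 = 0 := by
    intro l hl1 hl2
    by_contra h
    have hq : 0 < q l t0 :=
      lt_of_le_of_ne (hqnn l (by omega) (by omega) t0 ht0T) (Ne.symm h)
    have he := hE1eq l (by omega) (by omega) t0 ht0T hq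
    have hτeq : ∑ k ∈ Finset.Icc 1 l, p k t0 = ∑ k ∈ Finset.Icc 1 i, p k t0 := by
      apply Finset.sum_subset (Finset.Icc_subset_Icc le_rfl (by omega))
      intro x hx hnx
      have hx' := Finset.mem_Icc.mp hx
      have hxl : l < x := by
        by_contra hh
        push_neg at hh
        exact hnx (Finset.mem_Icc.mpr ⟨hx'.1, hh⟩)
      exact hzero x (by omega) hx'.2
    have hge := hE1ge i hi1 hiN t0 ht0T
    have := hL1 l (by omega) hl2
    linarith
  have hbj1 := hbind j1 hj1ge1 (by omega) t0 ht0T hpj1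
  have hsum2 : ∑ l ∈ Finset.Icc i N, q l t0 = ∑ l ∈ Finset.Icc j1 N, q l t0 := by
    apply Finset.sum_subset (Finset.Icc_subset_Icc (by omega) le_rfl)
    intro x hx hnx
    have hx' := Finset.mem_Icc.mp hx
    have hxi : x < i := by
      by_contra hh
      push_neg at hh
      exact hnx (Finset.mem_Icc.mpr ⟨hh, hx'.2⟩)
    exact hql0 x hx'.1 hxi
  have hμj1 : μ j1 ≤ μ i := by
    have := hcap i hi1 hiN t0 ht0T
    linarith
  set S := (Finset.Ico 1 i).filter (fun jj => μ jj ≤ μ i) with hS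
  have hSne : S.Nonempty :=
    ⟨j1, Finset.mem_filter.mpr ⟨Finset.mem_Ico.mpr ⟨hj1ge1, hj1i⟩, hμj1⟩⟩
  set j2 := S.max' hSne with hj2def
  have hj2mem := Finset.mem_filter.mp (S.max'_mem hSne)
  have hj2Ico := Finset.mem_Ico.mp hj2mem.1
  have hj2ge1 : 1 ≤ j2 := hj2Ico.1
  have hj2lti : j2 < i := hj2Ico.2
  have hμj2 : μ j2 ≤ μ i := hj2mem.2
  obtain ⟨t1, ht1T, hqj2⟩ := hsupp j2 hj2ge1 (by omega)
  obtain ⟨m, hj2m, hmi, hpm, hμm⟩ :=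
    hstep j2 i t1 hj2ge1 hj2lti hiN ht1T hqj2 (hL1 j2 hj2ge1 hj2lti)
  have hmlt : m < i := by
    rcases lt_or_eq_of_le hmi with h | h
    · exact h
    · exfalso; rw [h] at hμm; linarith
  have hmS : m ∈ S := Finset.mem_filter.mpr ⟨Finset.mem_Ico.mpr ⟨by omega, hmlt⟩, by linarith⟩
  have : m ≤ j2 := S.le_max' m hmS
  omega
end
end

section
/- In a pricing equilibrium of the morning-commute corridor network, if bottleneck i with 1 < i ≤ N is non-false, then for every downstream index m < i the arrival-time window of origin m is strictly contained in that of origin i: t_i^- < t_m^- and t_m^+ < t_i^+, so that 𝒯_m ⊂ 𝒯_i. -/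
open MeasureTheory Finset Set
open scoped Classical

noncomputable section

private lemma sum_split (f : ℕ → ℝ) {a b n : ℕ} (hb : 1 ≤ b) (hab : a ≤ b) (hbn : b ≤ n) :
    ∑ j ∈ Finset.Icc a n, f j = (∑ j ∈ Finset.Icc a (b-1), f j) + ∑ j ∈ Finset.Icc b n, f j := by
  rw [← Finset.sum_union]
  · congr 1
    ext x
    simp only [Finset.mem_union, Finset.mem_Icc]
    omega
  · rw [Finset.disjoint_left]
    intro x hx hx'
    simp only [Finset.mem_Icc] at hx hx'
    omega

private lemma qc_pos {T td : ℝ} {s : ℝ → ℝ}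
    (hsnn : ∀ t ∈ Set.Icc (0:ℝ) T, 0 ≤ s t) (hstd : s td = 0)
    (htd : td ∈ Set.Icc (0:ℝ) T)
    (hqc : ∀ a ∈ Set.Icc (0:ℝ) T, ∀ b ∈ Set.Icc (0:ℝ) T, a ≠ b →
      ∀ l ∈ Set.Ioo (0:ℝ) 1, s (l * a + (1 - l) * b) < max (s a) (s b))
    {x : ℝ} (hx : x ∈ Set.Icc (0:ℝ) T) (hne : x ≠ td) : 0 < s x := by
  rcases lt_or_eq_of_le (hsnn x hx) with h | h
  · exact h
  exfalso
  have hmid := hqc x hx td htd hne (1/2) (by norm_num)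
  have hz : (1/2 : ℝ) * x + (1 - 1/2) * td ∈ Set.Icc (0:ℝ) T := by
    constructor
    · nlinarith [hx.1, htd.1]
    · nlinarith [hx.2, htd.2]
  have hz0 := hsnn _ hz
  rw [← h, hstd] at hmid
  simp at hmid
  linarith

private lemma qc_dec {T td : ℝ} {s : ℝ → ℝ}
    (hsnn : ∀ t ∈ Set.Icc (0:ℝ) T, 0 ≤ s t) (hstd : s td = 0)
    (htd : td ∈ Set.Icc (0:ℝ) T)
    (hqc : ∀ a ∈ Set.Icc (0:ℝ) T, ∀ b ∈ Set.Icc (0:ℝ) T, a ≠ b →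
      ∀ l ∈ Set.Ioo (0:ℝ) 1, s (l * a + (1 - l) * b) < max (s a) (s b))
    {x y : ℝ} (hx : x ∈ Set.Icc (0:ℝ) T) (hy : y ∈ Set.Icc (0:ℝ) T)
    (hxy : x < y) (hytd : y ≤ td) : s y < s x := by
  rcases eq_or_lt_of_le hytd with h | h
  · subst h
    rw [hstd]
    exact qc_pos hsnn hstd htd hqc hx (ne_of_lt hxy)
  · have hdx : 0 < td - x := by linarith
    have hdy : 0 < td - y := by linarith
    have hlo : (td - y) / (td - x) ∈ Set.Ioo (0:ℝ) 1 := by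
      constructor
      · positivity
      · rw [div_lt_one hdx]; linarith
    have hmid := hqc x hx td htd (ne_of_lt (by linarith : x < td)) _ hlo
    have hzy : (td - y) / (td - x) * x + (1 - (td - y) / (td - x)) * td = y := by
      field_simp
      ring
    rw [hzy, hstd, max_eq_left (hsnn x hx)] at hmid
    exact hmid

private lemma qc_inc {T td : ℝ} {s : ℝ → ℝ}
    (hsnn : ∀ t ∈ Set.Icc (0:ℝ) T, 0 ≤ s t) (hstd : s td = 0)
    (htd : td ∈ Set.Icc (0:ℝ) T)
    (hqc : ∀ a ∈ Set.Icc (0:ℝ) T, ∀ b ∈ Set.Icc (0:ℝ) T, a ≠ b →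
      ∀ l ∈ Set.Ioo (0:ℝ) 1, s (l * a + (1 - l) * b) < max (s a) (s b))
    {x y : ℝ} (hx : x ∈ Set.Icc (0:ℝ) T) (hy : y ∈ Set.Icc (0:ℝ) T)
    (hxy : x < y) (htdx : td ≤ x) : s x < s y := by
  rcases eq_or_lt_of_le htdx with h | h
  · rw [← h, hstd]
    exact qc_pos hsnn hstd htd hqc hy (ne_of_gt (h ▸ hxy))
  · have hdy : 0 < y - td := by linarith
    have hdx : 0 < x - td := by linarith
    have hlo : (x - td) / (y - td) ∈ Set.Ioo (0:ℝ) 1 := by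
      constructor
      · positivity
      · rw [div_lt_one hdy]; linarith
    have hmid := hqc y hy td htd (ne_of_gt (by linarith : td < y)) _ hlo
    have hzx : (x - td) / (y - td) * y + (1 - (x - td) / (y - td)) * td = x := by
      field_simp
      ring
    rw [hzx, hstd, max_eq_left (hsnn y hy)] at hmid
    exact hmid

/-- if bottleneck `i` (`1 < i ≤ N`) is non-false then for every
`m < i` the window of `m` is strictly contained in that of `i`. -/
theorem stmt3 (N : ℕ) (T td : ℝ) (μ Q c : ℕ → ℝ) (s : ℝ → ℝ)
    (q p : ℕ → ℝ → ℝ) (ρ : ℕ → ℝ) (tm tp : ℕ → ℝ)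
    (hnet : CorridorNet N T td μ Q c s)
    (heq : IsPricingEq N T μ Q c s q p ρ)
    (hwin : ∀ i ∈ Finset.Icc 1 N, IsWindow T (q i) (tm i) (tp i))
    (hreg : ∀ i ∈ Finset.Icc 1 N, s (tm i) = ρ i - c i ∧ s (tp i) = ρ i - c i)
    (i : ℕ) (hi1 : 1 < i) (hiN : i ≤ N)
    (hnf : NonFalse T p i) :
    ∀ m, 1 ≤ m → m < i → tm i < tm m ∧ tp m < tp i := by
  obtain ⟨hN1, hT, htdo, hpos, hscont, hsnn, hstd, hsqc⟩ := hnet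
  obtain ⟨hmeas, hbdd, hnn, hE1, hE2, hE3⟩ := heq
  have htdIcc : td ∈ Set.Icc (0:ℝ) T := ⟨htdo.1.le, htdo.2.le⟩
  have hiN' : i ∈ Finset.Icc 1 N := Finset.mem_Icc.mpr ⟨hi1.le, hiN⟩
  have hi1N : i - 1 ∈ Finset.Icc 1 N := Finset.mem_Icc.mpr ⟨by omega, by omega⟩
  -- nonempty support of every flow
  have hsupp : ∀ j, 1 ≤ j → j ≤ N → ∃ t ∈ Set.Icc (0:ℝ) T, 0 < q j t := by
    intro j hj1 hjN
    have hjmem : j ∈ Finset.Icc 1 N := Finset.mem_Icc.mpr ⟨hj1, hjN⟩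
    by_contra hcon
    push_neg at hcon
    have hq0 : Set.EqOn (q j) (fun _ => (0:ℝ)) (Set.uIcc 0 T) := by
      intro t ht
      rw [Set.uIcc_of_le hT.le] at ht
      exact le_antisymm (hcon t ht) ((hnn j hjmem t ht).1)
    have hint : ∫ t in (0:ℝ)..T, q j t = ∫ t in (0:ℝ)..T, (0:ℝ) :=
      intervalIntegral.integral_congr (μ := MeasureTheory.volume) hq0
    rw [hE3 j hjmem] at hint
    simp at hint
    exact absurd hint (ne_of_gt (hpos j hjmem).2.1)
  -- monotonicity of ρ j - c j
  have hrmono : ∀ a b, 1 ≤ a → a ≤ b → b ≤ N → ρ a - c a ≤ ρ b - c b := by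
    intro a b ha hab hbN
    obtain ⟨t, ht, hqt⟩ := hsupp b (le_trans ha hab) hbN
    have hamem : a ∈ Finset.Icc 1 N := Finset.mem_Icc.mpr ⟨ha, le_trans hab hbN⟩
    have hbmem : b ∈ Finset.Icc 1 N := Finset.mem_Icc.mpr ⟨le_trans ha hab, hbN⟩
    have heqb := (hE1 b hbmem t ht).2 hqt
    have ha' := (hE1 a hamem t ht).1
    have hsub : ∑ l ∈ Finset.Icc 1 a, p l t ≤ ∑ l ∈ Finset.Icc 1 b, p l t := by
      apply Finset.sum_le_sum_of_subset_of_nonneg (Finset.Icc_subset_Icc_right hab)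
      intro l hl _
      have hl' := Finset.mem_Icc.mp hl
      exact (hnn l (Finset.mem_Icc.mpr ⟨hl'.1, le_trans hl'.2 hbN⟩) t ht).2
    linarith
  -- window geometry facts for every origin
  have hwinfacts : ∀ j, 1 ≤ j → j ≤ N →
      tm j ∈ Set.Icc (0:ℝ) T ∧ tp j ∈ Set.Icc (0:ℝ) T ∧ tm j < td ∧ td < tp j := by
    intro j hj1 hjN
    have hjmem : j ∈ Finset.Icc 1 N := Finset.mem_Icc.mpr ⟨hj1, hjN⟩
    obtain ⟨hab, hsub, hmin⟩ := hwin j hjmem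
    have hsubT : Set.Icc (tm j) (tp j) ⊆ Set.Icc (0:ℝ) T :=
      hmin 0 T (fun t ht => ht.1)
    have htmT : tm j ∈ Set.Icc (0:ℝ) T := hsubT ⟨le_refl _, hab⟩
    have htpT : tp j ∈ Set.Icc (0:ℝ) T := hsubT ⟨hab, le_refl _⟩
    have hlt : tm j < tp j := by
      rcases lt_or_eq_of_le hab with h | h
      · exact h
      exfalso
      have h0 : ∀ᵐ x : ℝ, x ≠ tm j := by
        rw [MeasureTheory.ae_iff]
        have : {x : ℝ | ¬x ≠ tm j} = {tm j} := by
          ext x; simp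
        rw [this]
        exact MeasureTheory.measure_singleton _
      have hint : ∫ t in (0:ℝ)..T, q j t = ∫ t in (0:ℝ)..T, (0:ℝ) := by
        apply intervalIntegral.integral_congr_ae
        filter_upwards [h0] with x hx hxI
        have hxT : x ∈ Set.Icc (0:ℝ) T := by
          rw [Set.uIoc_of_le hT.le] at hxI
          exact Set.Ioc_subset_Icc_self hxI
        by_contra hne
        have hq : 0 < q j x := lt_of_le_of_ne (hnn j hjmem x hxT).1 (Ne.symm hne)
        have hmem := hsub ⟨hxT, hq⟩
        rw [← h] at hmem
        exact hx (le_antisymm hmem.2 hmem.1)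
      rw [hE3 j hjmem] at hint
      simp at hint
      exact absurd hint (ne_of_gt (hpos j hjmem).2.1)
    obtain ⟨hsm, hsp⟩ := hreg j hjmem
    have htm_td : tm j < td := by
      by_contra hcon
      push_neg at hcon
      have hmono := qc_inc hsnn hstd htdIcc hsqc htmT htpT hlt hcon
      rw [hsm, hsp] at hmono
      exact lt_irrefl _ hmono
    have htd_tp : td < tp j := by
      by_contra hcon
      push_neg at hcon
      have hmono := qc_dec hsnn hstd htdIcc hsqc htmT htpT hlt hcon
      rw [hsm, hsp] at hmono
      exact lt_irrefl _ hmono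
    exact ⟨htmT, htpT, htm_td, htd_tp⟩
  -- the key strict inequality ρ (i-1) - c (i-1) < ρ i - c i
  have hkey : ρ (i-1) - c (i-1) < ρ i - c i := by
    rcases lt_or_ge (ρ (i-1) - c (i-1)) (ρ i - c i) with h | h
    · exact h
    exfalso
    have hreq : ρ (i-1) - c (i-1) = ρ i - c i :=
      le_antisymm (hrmono (i-1) i (by omega) (by omega) hiN) h
    -- price at i vanishes on the support of q i
    have hpz : ∀ t ∈ Set.Icc (0:ℝ) T, 0 < q i t →
        p i t = 0 ∧ ∑ l ∈ Finset.Icc 1 i, p l t = ρ i - c i - s t := by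
      intro t ht hq
      have heqi := (hE1 i hiN' t ht).2 hq
      have hle := (hE1 (i-1) hi1N t ht).1
      have hsum : ∑ l ∈ Finset.Icc 1 i, p l t = ρ i - c i - s t := by linarith
      have hsplit : ∑ l ∈ Finset.Icc 1 i, p l t
          = (∑ l ∈ Finset.Icc 1 (i-1), p l t) + ∑ l ∈ Finset.Icc i i, p l t :=
        sum_split _ (by omega) (by omega) (le_refl i)
      rw [Finset.Icc_self, Finset.sum_singleton] at hsplit
      have hpnn := (hnn i hiN' t ht).2
      exact ⟨by linarith, hsum⟩
    obtain ⟨ts, hts, hpts⟩ := hnf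
    have hcap := (hE2 i hiN' ts hts).2 hpts
    have hqits : ¬ 0 < q i ts := by
      intro hqi
      have := (hpz ts hts hqi).1
      linarith
    have hex : ∃ j ∈ Finset.Icc i N, 0 < q j ts := by
      by_contra hcon
      push_neg at hcon
      have hsle : ∑ j ∈ Finset.Icc i N, q j ts ≤ 0 := Finset.sum_nonpos hcon
      linarith [(hpos i hiN').1]
    obtain ⟨j0, hj0, hj0q⟩ := hex
    set S := (Finset.Icc i N).filter (fun j => 0 < q j ts) with hSdef
    have hSne : S.Nonempty := ⟨j0, Finset.mem_filter.mpr ⟨hj0, hj0q⟩⟩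
    set k := S.min' hSne with hkdef
    have hkS : k ∈ S := Finset.min'_mem _ _
    have hk1 := Finset.mem_Icc.mp (Finset.mem_filter.mp hkS).1
    have hqk : 0 < q k ts := (Finset.mem_filter.mp hkS).2
    have hik : i < k := lt_of_le_of_ne hk1.1 (fun h' => hqits (h' ▸ hqk))
    have hkN : k ∈ Finset.Icc 1 N := Finset.mem_Icc.mpr ⟨by omega, hk1.2⟩
    have heqk := (hE1 k hkN ts hts).2 hqk
    -- strict gap: ρ i - c i < ρ k - c k
    have hr_lt : ρ i - c i < ρ k - c k := by
      have hle := (hE1 (i-1) hi1N ts hts).1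
      have hsplit : ∑ l ∈ Finset.Icc 1 k, p l ts
          = (∑ l ∈ Finset.Icc 1 (i-1), p l ts) + ∑ l ∈ Finset.Icc i k, p l ts :=
        sum_split _ (by omega) (by omega) hik.le
      have hpi_le : p i ts ≤ ∑ l ∈ Finset.Icc i k, p l ts := by
        apply Finset.single_le_sum (f := fun l => p l ts)
        · intro l hl
          have hl' := Finset.mem_Icc.mp hl
          exact (hnn l (Finset.mem_Icc.mpr ⟨by omega, le_trans hl'.2 hk1.2⟩) ts hts).2
        · exact Finset.mem_Icc.mpr ⟨le_refl i, hik.le⟩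
      linarith
    -- a point in the support of q i
    obtain ⟨t0, ht0, hq0⟩ := hsupp i (by omega) hiN
    obtain ⟨hpz0, hsum0⟩ := hpz t0 ht0 hq0
    have hlek := (hE1 k hkN t0 ht0).1
    have hsplit0 : ∑ l ∈ Finset.Icc 1 k, p l t0
        = (∑ l ∈ Finset.Icc 1 i, p l t0) + ∑ l ∈ Finset.Icc (i+1) k, p l t0 := by
      have := sum_split (fun l => p l t0) (a := 1) (b := i+1) (n := k) (by omega) (by omega) (by omega)
      simpa using this
    have hpos0 : 0 < ∑ l ∈ Finset.Icc (i+1) k, p l t0 := by linarith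
    have hexl : ∃ l0 ∈ Finset.Icc (i+1) k, 0 < p l0 t0 := by
      by_contra hcon
      push_neg at hcon
      have := Finset.sum_nonpos hcon
      linarith
    obtain ⟨l0, hl0mem, hpl0⟩ := hexl
    have hl0 := Finset.mem_Icc.mp hl0mem
    have hl0N : l0 ∈ Finset.Icc 1 N := Finset.mem_Icc.mpr ⟨by omega, le_trans hl0.2 hk1.2⟩
    have hcapl0 := (hE2 l0 hl0N t0 ht0).2 hpl0
    -- capacity comparison at t0 : μ l0 < μ i
    have hni : i ∉ Finset.Icc l0 N := by
      simp only [Finset.mem_Icc]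
      omega
    have hmono_cap : q i t0 + ∑ j ∈ Finset.Icc l0 N, q j t0 ≤ ∑ j ∈ Finset.Icc i N, q j t0 := by
      rw [← Finset.sum_insert (f := fun j => q j t0) hni]
      apply Finset.sum_le_sum_of_subset_of_nonneg
      · intro x hx
        rcases Finset.mem_insert.mp hx with h' | h'
        · subst h'; exact Finset.mem_Icc.mpr ⟨le_refl _, hiN⟩
        · have hx' := Finset.mem_Icc.mp h'
          exact Finset.mem_Icc.mpr ⟨by omega, hx'.2⟩
      · intro j hj _
        have hj' := Finset.mem_Icc.mp hj
        exact (hnn j (Finset.mem_Icc.mpr ⟨by omega, hj'.2⟩) t0 ht0).1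
    have hbound_i := (hE2 i hiN' t0 ht0).1
    -- at ts : the flow through bottleneck i is all from origins ≥ k
    have hts_sum : ∑ j ∈ Finset.Icc k N, q j ts = ∑ j ∈ Finset.Icc i N, q j ts := by
      apply Finset.sum_subset (Finset.Icc_subset_Icc_left hk1.1)
      intro x hx hnx
      by_contra hxne
      have hx' := Finset.mem_Icc.mp hx
      have hxk : x < k := by
        by_contra hxk'
        exact hnx (Finset.mem_Icc.mpr ⟨by omega, hx'.2⟩)
      have hqx : 0 < q x ts :=
        lt_of_le_of_ne (hnn x (Finset.mem_Icc.mpr ⟨by omega, hx'.2⟩) ts hts).1 (Ne.symm hxne)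
      have hxS : x ∈ S := Finset.mem_filter.mpr ⟨hx, hqx⟩
      have := Finset.min'_le S x hxS
      omega
    have hge : ∑ j ∈ Finset.Icc k N, q j ts ≤ ∑ j ∈ Finset.Icc l0 N, q j ts := by
      apply Finset.sum_le_sum_of_subset_of_nonneg (Finset.Icc_subset_Icc_left hl0.2)
      intro j hj _
      have hj' := Finset.mem_Icc.mp hj
      exact (hnn j (Finset.mem_Icc.mpr ⟨by omega, hj'.2⟩) ts hts).1
    have hbound_l0 := (hE2 l0 hl0N ts hts).1
    linarith
  -- conclusion
  intro m hm1 hmi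
  have hmN : m ≤ N := by omega
  have hmmem : m ∈ Finset.Icc 1 N := Finset.mem_Icc.mpr ⟨hm1, hmN⟩
  have hrm : ρ m - c m < ρ i - c i :=
    lt_of_le_of_lt (hrmono m (i-1) hm1 (by omega) (by omega)) hkey
  obtain ⟨htmiT, htpiT, htmitd, htditpi⟩ := hwinfacts i (by omega) hiN
  obtain ⟨htmmT, htpmT, htmmtd, htdtpm⟩ := hwinfacts m hm1 hmN
  obtain ⟨hsmi, hspi⟩ := hreg i hiN'
  obtain ⟨hsmm, hspm⟩ := hreg m hmmem
  constructor
  · by_contra hcon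
    push_neg at hcon
    rcases eq_or_lt_of_le hcon with h | h
    · rw [h, hsmi] at hsmm
      linarith
    · have hmono := qc_dec hsnn hstd htdIcc hsqc htmmT htmiT h htmitd.le
      rw [hsmm, hsmi] at hmono
      linarith
  · by_contra hcon
    push_neg at hcon
    rcases eq_or_lt_of_le hcon with h | h
    · rw [h, hspm] at hspi
      linarith
    · have hmono := qc_inc hsnn hstd htdIcc hsqc htpiT htpmT h htditpi.le
      rw [hspi, hspm] at hmono
      linarith
end
end

section
/- In a pricing equilibrium of the morning-commute corridor network, a bottleneck i is non-false if and only if every downstream bottleneck m < i has a strictly smaller normalized demand than bottleneck i, i.e. Q̄_m < Q̄_i for all m < i; moreover, in all the cases where the definition of the normalized demand involves the denominator μ_k − μ_{n(k)}, that denominator is strictly positive. -/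
open MeasureTheory Finset Set
open scoped Classical

noncomputable section

/-- The smallest non-false index strictly greater than `k` (junk if none). -/
def nextNF (N : ℕ) (T : ℝ) (p : ℕ → ℝ → ℝ) (k : ℕ) : ℕ :=
  sInf {m | k < m ∧ m ≤ N ∧ NonFalse T p m}

/-- Normalized demand `Q̄_k`. -/
def Qbar (N : ℕ) (T : ℝ) (μ Q : ℕ → ℝ) (p : ℕ → ℝ → ℝ) (k : ℕ) : ℝ :=
  if ∃ m, k < m ∧ m ≤ N ∧ NonFalse T p m then
    (∑ j ∈ Finset.Icc k (nextNF N T p k - 1), Q j) / (μ k - μ (nextNF N T p k))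
  else (∑ j ∈ Finset.Icc k N, Q j) / μ k

/-!
Strict quasi-convexity and `s (t_i^±) = ρ i - c i` make the window of origin `i` exactly the
sublevel set `{s ≤ ρ i - c i}`, so windows are nested like these levels. The levels are
nondecreasing in `i`, constant between consecutive non-false bottlenecks and jump at each
non-false one, and a non-false bottleneck `n` is saturated wherever `s` is below its level.

Let `k ≤ m` be the last non-false bottleneck and `n > m` the next one (`n = N + 1` with
`μ (N + 1) = 0` if there is none). The origins `k, …, n - 1` all use the window `W k`, so
integrating the flow through `m` over `W k` gives `∑_{j=m}^{n-1} Q j + μ n · |W k| ≤ μ m · |W k|`,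
with equality when `m = k`. Hence `μ n < μ m` and `Q̄ m ≤ |W k|`, with equality for non-false `m`;
window widths strictly increase along non-false bottlenecks.
-/

def StrictQuasiconvexOn (I : Set ℝ) (s : ℝ → ℝ) : Prop :=
  ∀ a ∈ I, ∀ b ∈ I, a ≠ b → ∀ l ∈ Set.Ioo (0:ℝ) 1, s (l * a + (1 - l) * b) < max (s a) (s b)

namespace StrictQuasiconvexOn

variable {I : Set ℝ} {s : ℝ → ℝ} {a b t w : ℝ}

theorem lt_max (hs : StrictQuasiconvexOn I s) (ha : a ∈ I) (hb : b ∈ I)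
    (ht : t ∈ Set.Ioo a b) : s t < max (s a) (s b) := by
  have hab : 0 < b - a := by linarith [ht.1, ht.2]
  have key := hs a ha b hb (ht.1.trans ht.2).ne ((b - t) / (b - a))
    ⟨div_pos (by linarith [ht.2]) hab, (div_lt_one hab).2 (by linarith [ht.1])⟩
  have hcomb : (b - t) / (b - a) * a + (1 - (b - t) / (b - a)) * b = t := by
    field_simp
    ring
  rwa [hcomb] at key

theorem mem_Icc_iff (hs : StrictQuasiconvexOn I s) (ha : a ∈ I) (hb : b ∈ I) (hab : a < b)
    (hsa : s a = w) (hsb : s b = w) (ht : t ∈ I) : t ∈ Set.Icc a b ↔ s t ≤ w := by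
  constructor
  · rintro ⟨hat, htb⟩
    rcases hat.eq_or_lt with rfl | hat
    · exact hsa.le
    rcases htb.eq_or_lt with rfl | htb
    · exact hsb.le
    simpa [hsa, hsb] using (hs.lt_max ha hb ⟨hat, htb⟩).le
  · intro hst
    by_contra hout
    rcases not_and_or.1 hout with hta | hbt
    · have := hs.lt_max ht hb ⟨lt_of_not_ge hta, hab⟩
      rw [hsa, hsb, max_eq_right hst] at this
      exact lt_irrefl w this
    · have := hs.lt_max ha ht ⟨hab, lt_of_not_ge hbt⟩
      rw [hsa, hsb, max_eq_left hst] at this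
      exact lt_irrefl w this

theorem mem_Ioo_iff (hs : StrictQuasiconvexOn I s) (ha : a ∈ I) (hb : b ∈ I) (hab : a < b)
    (hsa : s a = w) (hsb : s b = w) (ht : t ∈ I) : t ∈ Set.Ioo a b ↔ s t < w := by
  constructor
  · intro htab
    simpa [hsa, hsb] using hs.lt_max ha hb htab
  · intro hst
    obtain ⟨hat, htb⟩ := (hs.mem_Icc_iff ha hb hab hsa hsb ht).2 hst.le
    exact ⟨hat.lt_of_ne (by rintro rfl; linarith), htb.lt_of_ne (by rintro rfl; linarith)⟩

end StrictQuasiconvexOn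

structure CorridorEquilibrium where
  N : ℕ
  T : ℝ
  td : ℝ
  μ : ℕ → ℝ
  Q : ℕ → ℝ
  c : ℕ → ℝ
  s : ℝ → ℝ
  q : ℕ → ℝ → ℝ
  p : ℕ → ℝ → ℝ
  ρ : ℕ → ℝ
  tm : ℕ → ℝ
  tp : ℕ → ℝ
  network : CorridorNet N T td μ Q c s
  pricing : IsPricingEq N T μ Q c s q p ρ
  window : ∀ i ∈ Finset.Icc 1 N, IsWindow T (q i) (tm i) (tp i)
  regular : ∀ i ∈ Finset.Icc 1 N, s (tm i) = ρ i - c i ∧ s (tp i) = ρ i - c i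

namespace CorridorEquilibrium

variable (E : CorridorEquilibrium) {i j k l m n : ℕ} {t : ℝ}

def level (i : ℕ) : ℝ := E.ρ i - E.c i

def cumPrice (i : ℕ) (t : ℝ) : ℝ := ∑ j ∈ Finset.Icc 1 i, E.p j t

def flow (i : ℕ) (t : ℝ) : ℝ := ∑ j ∈ Finset.Icc i E.N, E.q j t

theorem one_mem_Icc : 1 ∈ Finset.Icc 1 E.N := Finset.mem_Icc.2 ⟨le_rfl, E.network.1⟩

theorem T_nonneg : 0 ≤ E.T := E.network.2.1.le

theorem capacity_pos (hi : i ∈ Finset.Icc 1 E.N) : 0 < E.μ i := (E.network.2.2.2.1 i hi).1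

theorem demand_pos (hi : i ∈ Finset.Icc 1 E.N) : 0 < E.Q i := (E.network.2.2.2.1 i hi).2.1

theorem strictQuasiconvexOn : StrictQuasiconvexOn (Set.Icc 0 E.T) E.s :=
  E.network.2.2.2.2.2.2.2

theorem q_nonneg (hi : i ∈ Finset.Icc 1 E.N) (ht : t ∈ Set.Icc 0 E.T) : 0 ≤ E.q i t :=
  (E.pricing.2.2.1 i hi t ht).1

theorem p_nonneg (hi : i ∈ Finset.Icc 1 E.N) (ht : t ∈ Set.Icc 0 E.T) : 0 ≤ E.p i t :=
  (E.pricing.2.2.1 i hi t ht).2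

theorem level_le (hi : i ∈ Finset.Icc 1 E.N) (ht : t ∈ Set.Icc 0 E.T) :
    E.level i ≤ E.s t + E.cumPrice i t := by
  have := (E.pricing.2.2.2.1 i hi t ht).1
  unfold level cumPrice
  linarith

theorem level_eq (hi : i ∈ Finset.Icc 1 E.N) (ht : t ∈ Set.Icc 0 E.T) (hq : 0 < E.q i t) :
    E.level i = E.s t + E.cumPrice i t := by
  have := (E.pricing.2.2.2.1 i hi t ht).2 hq
  unfold level cumPrice
  linarith

theorem flow_le (hi : i ∈ Finset.Icc 1 E.N) (ht : t ∈ Set.Icc 0 E.T) : E.flow i t ≤ E.μ i :=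
  (E.pricing.2.2.2.2.1 i hi t ht).1

theorem flow_eq_of_p_pos (hi : i ∈ Finset.Icc 1 E.N) (ht : t ∈ Set.Icc 0 E.T)
    (hp : 0 < E.p i t) : E.flow i t = E.μ i :=
  (E.pricing.2.2.2.2.1 i hi t ht).2 hp

theorem intervalIntegral_q (hi : i ∈ Finset.Icc 1 E.N) : ∫ t in (0:ℝ)..E.T, E.q i t = E.Q i :=
  E.pricing.2.2.2.2.2 i hi

theorem integrableOn_q (hi : i ∈ Finset.Icc 1 E.N) : IntegrableOn (E.q i) (Set.Icc 0 E.T) := by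
  obtain ⟨M, hM⟩ := E.pricing.2.1 i hi
  refine Measure.integrableOn_of_bounded (M := M) (by simp)
    (E.pricing.1 i hi).1.aestronglyMeasurable ?_
  filter_upwards [ae_restrict_mem measurableSet_Icc] with t ht
  rw [Real.norm_eq_abs, abs_of_nonneg (E.q_nonneg hi ht)]
  exact (hM t ht).1

theorem mem_window (hi : i ∈ Finset.Icc 1 E.N) (ht : t ∈ Set.Icc 0 E.T) (hq : 0 < E.q i t) :
    t ∈ Set.Icc (E.tm i) (E.tp i) :=
  (E.window i hi).2.1 ⟨ht, hq⟩

theorem window_subset (hi : i ∈ Finset.Icc 1 E.N) : Set.Icc (E.tm i) (E.tp i) ⊆ Set.Icc 0 E.T :=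
  (E.window i hi).2.2 0 E.T fun _ ht => ht.1

theorem p_eq_zero (hi : i ∈ Finset.Icc 1 E.N) (hNF : ¬NonFalse E.T E.p i)
    (ht : t ∈ Set.Icc 0 E.T) : E.p i t = 0 :=
  le_antisymm (not_lt.1 fun hp => hNF ⟨t, ht, hp⟩) (E.p_nonneg hi ht)

theorem cumPrice_zero : E.cumPrice 0 t = 0 := by
  simp [cumPrice]

theorem cumPrice_eq_add (hkl : k ≤ l) (t : ℝ) :
    E.cumPrice l t = E.cumPrice k t + ∑ j ∈ Finset.Ioc k l, E.p j t :=
  (Finset.sum_Ioc_consecutive _ (Nat.zero_le k) hkl).symm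

theorem cumPrice_le_cumPrice (hkl : k ≤ l) (hl : l ≤ E.N) (ht : t ∈ Set.Icc 0 E.T) :
    E.cumPrice k t ≤ E.cumPrice l t := by
  rw [E.cumPrice_eq_add hkl]
  refine le_add_of_nonneg_right (Finset.sum_nonneg fun j hj => E.p_nonneg ?_ ht)
  rw [Finset.mem_Ioc] at hj
  exact Finset.mem_Icc.2 ⟨by omega, by omega⟩

theorem cumPrice_eq_of_not_nonFalse (hkl : k ≤ l) (hl : l ≤ E.N)
    (hgap : ∀ j, k < j → j ≤ l → ¬NonFalse E.T E.p j) (ht : t ∈ Set.Icc 0 E.T) :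
    E.cumPrice l t = E.cumPrice k t := by
  rw [E.cumPrice_eq_add hkl, add_eq_left]
  refine Finset.sum_eq_zero fun j hj => ?_
  rw [Finset.mem_Ioc] at hj
  exact E.p_eq_zero (Finset.mem_Icc.2 ⟨by omega, by omega⟩) (hgap j hj.1 hj.2) ht

theorem cumPrice_succ (n : ℕ) (t : ℝ) :
    E.cumPrice (n + 1) t = E.cumPrice n t + E.p (n + 1) t :=
  Finset.sum_Icc_succ_top (Nat.le_add_left 1 n) _

theorem exists_p_pos_of_cumPrice_lt (hkl : k ≤ l) (h : E.cumPrice k t < E.cumPrice l t) :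
    ∃ j ∈ Finset.Ioc k l, 0 < E.p j t := by
  rw [E.cumPrice_eq_add hkl, lt_add_iff_pos_right] at h
  exact Finset.exists_lt_of_sum_lt (f := fun _ => 0) (by simpa using h)

theorem flow_eq_add (hkn : k ≤ n) (hn : n ≤ E.N + 1) (t : ℝ) :
    E.flow k t = ∑ j ∈ Finset.Ico k n, E.q j t + E.flow n t := by
  simp only [flow, ← Finset.Ico_add_one_right_eq_Icc]
  exact (Finset.sum_Ico_consecutive _ hkn hn).symm

theorem flow_le_flow (hk : 1 ≤ k) (hkn : k ≤ n) (hn : n ≤ E.N + 1)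
    (ht : t ∈ Set.Icc 0 E.T) : E.flow n t ≤ E.flow k t := by
  rw [E.flow_eq_add hkn hn]
  refine le_add_of_nonneg_left (Finset.sum_nonneg fun j hj => E.q_nonneg ?_ ht)
  rw [Finset.mem_Ico] at hj
  exact Finset.mem_Icc.2 ⟨by omega, by omega⟩

theorem flow_eq_flow_of_q_eq_zero (hkn : k ≤ n) (hn : n ≤ E.N + 1)
    (hq : ∀ j, k ≤ j → j < n → E.q j t = 0) : E.flow k t = E.flow n t := by
  rw [E.flow_eq_add hkn hn, add_eq_right]
  exact Finset.sum_eq_zero fun j hj => hq j (Finset.mem_Ico.1 hj).1 (Finset.mem_Ico.1 hj).2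

theorem exists_q_pos_of_flow_pos (h : 0 < E.flow k t) : ∃ j ∈ Finset.Icc k E.N, 0 < E.q j t :=
  Finset.exists_lt_of_sum_lt (f := fun _ => 0) (by simpa [flow] using h)

theorem volume_support_ne_zero (hi : i ∈ Finset.Icc 1 E.N) :
    volume {t | t ∈ Set.Icc 0 E.T ∧ 0 < E.q i t} ≠ 0 := by
  intro h0
  have hzero : E.q i =ᵐ[volume.restrict (Set.Ioc 0 E.T)] 0 := by
    filter_upwards [ae_restrict_of_ae (measure_eq_zero_iff_ae_notMem.1 h0),
      ae_restrict_mem measurableSet_Ioc] with t hnot hmem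
    have ht : t ∈ Set.Icc 0 E.T := Set.Ioc_subset_Icc_self hmem
    exact le_antisymm (not_lt.1 fun hq => hnot ⟨ht, hq⟩) (E.q_nonneg hi ht)
  have hQ := E.intervalIntegral_q hi
  rw [intervalIntegral.integral_of_le E.T_nonneg, integral_congr_ae hzero] at hQ
  simp only [Pi.zero_apply, integral_zero] at hQ
  exact (E.demand_pos hi).ne hQ

theorem exists_q_pos (hi : i ∈ Finset.Icc 1 E.N) : ∃ t ∈ Set.Icc 0 E.T, 0 < E.q i t :=
  nonempty_of_measure_ne_zero (E.volume_support_ne_zero hi)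

theorem tm_lt_tp (hi : i ∈ Finset.Icc 1 E.N) : E.tm i < E.tp i := by
  refine (E.window i hi).1.lt_of_ne fun h => E.volume_support_ne_zero hi ?_
  refine measure_mono_null (fun _ hmem => ?_) (measure_singleton (E.tm i))
  have := E.mem_window hi hmem.1 hmem.2
  rw [← h] at this
  exact le_antisymm this.2 this.1

theorem mem_window_iff (hi : i ∈ Finset.Icc 1 E.N) (ht : t ∈ Set.Icc 0 E.T) :
    t ∈ Set.Icc (E.tm i) (E.tp i) ↔ E.s t ≤ E.level i :=
  E.strictQuasiconvexOn.mem_Icc_iff (E.window_subset hi ⟨le_rfl, (E.tm_lt_tp hi).le⟩)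
    (E.window_subset hi ⟨(E.tm_lt_tp hi).le, le_rfl⟩) (E.tm_lt_tp hi) (E.regular i hi).1
    (E.regular i hi).2 ht

theorem mem_window_interior_iff (hi : i ∈ Finset.Icc 1 E.N) (ht : t ∈ Set.Icc 0 E.T) :
    t ∈ Set.Ioo (E.tm i) (E.tp i) ↔ E.s t < E.level i :=
  E.strictQuasiconvexOn.mem_Ioo_iff (E.window_subset hi ⟨le_rfl, (E.tm_lt_tp hi).le⟩)
    (E.window_subset hi ⟨(E.tm_lt_tp hi).le, le_rfl⟩) (E.tm_lt_tp hi) (E.regular i hi).1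
    (E.regular i hi).2 ht

theorem window_subset_window (hi : i ∈ Finset.Icc 1 E.N) (hj : j ∈ Finset.Icc 1 E.N)
    (h : E.level i ≤ E.level j) : Set.Icc (E.tm i) (E.tp i) ⊆ Set.Icc (E.tm j) (E.tp j) :=
  fun _ ht => (E.mem_window_iff hj (E.window_subset hi ht)).2
    (((E.mem_window_iff hi (E.window_subset hi ht)).1 ht).trans h)

theorem width_lt_width (hi : i ∈ Finset.Icc 1 E.N) (hj : j ∈ Finset.Icc 1 E.N)
    (h : E.level i < E.level j) : E.tp i - E.tm i < E.tp j - E.tm j := by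
  have hsub := E.window_subset_window hi hj h.le
  have htm := hsub ⟨le_rfl, (E.tm_lt_tp hi).le⟩
  have htp := hsub ⟨(E.tm_lt_tp hi).le, le_rfl⟩
  have hne_m : E.tm j ≠ E.tm i := fun he => by
    have := (E.regular i hi).1
    rw [← he, (E.regular j hj).1] at this
    exact h.ne' this
  have hne_p : E.tp i ≠ E.tp j := fun he => by
    have := (E.regular i hi).2
    rw [he, (E.regular j hj).2] at this
    exact h.ne' this
  linarith [lt_of_le_of_ne htm.1 hne_m, lt_of_le_of_ne htp.2 hne_p]

theorem level_le_level (hm : 1 ≤ m) (hmi : m ≤ i) (hi : i ∈ Finset.Icc 1 E.N) :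
    E.level m ≤ E.level i := by
  obtain ⟨hi1, hiN⟩ := Finset.mem_Icc.1 hi
  obtain ⟨t, ht, hq⟩ := E.exists_q_pos hi
  calc E.level m ≤ E.s t + E.cumPrice m t := E.level_le (Finset.mem_Icc.2 ⟨hm, by omega⟩) ht
    _ ≤ E.s t + E.cumPrice i t := by gcongr; exact E.cumPrice_le_cumPrice hmi hiN ht
    _ = E.level i := (E.level_eq hi ht hq).symm

theorem level_eq_of_not_nonFalse (hk : k ∈ Finset.Icc 1 E.N) (hkj : k ≤ j) (hj : j ≤ E.N)
    (hgap : ∀ l, k < l → l ≤ j → ¬NonFalse E.T E.p l) : E.level j = E.level k := by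
  obtain ⟨hk1, -⟩ := Finset.mem_Icc.1 hk
  refine le_antisymm ?_ (E.level_le_level hk1 hkj (Finset.mem_Icc.2 ⟨by omega, hj⟩))
  obtain ⟨t, ht, hq⟩ := E.exists_q_pos hk
  calc E.level j ≤ E.s t + E.cumPrice j t := E.level_le (Finset.mem_Icc.2 ⟨by omega, hj⟩) ht
    _ = E.s t + E.cumPrice k t := by rw [E.cumPrice_eq_of_not_nonFalse hkj hj hgap ht]
    _ = E.level k := (E.level_eq hk ht hq).symm

theorem nonFalse_one : NonFalse E.T E.p 1 := by
  obtain ⟨t, ht⟩ := Set.nonempty_Ioo.2 (E.tm_lt_tp E.one_mem_Icc)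
  have htT := E.window_subset E.one_mem_Icc (Set.Ioo_subset_Icc_self ht)
  have hlt := (E.mem_window_interior_iff E.one_mem_Icc htT).1 ht
  have hle := E.level_le E.one_mem_Icc htT
  simp only [cumPrice, Finset.Icc_self, Finset.sum_singleton] at hle
  exact ⟨t, htT, by linarith⟩

theorem capacity_le_of_nonFalse (hn : n ≤ E.N) (hNF : NonFalse E.T E.p n) (hj : 1 ≤ j)
    (hjn : j ≤ n) : E.μ n ≤ E.μ j := by
  obtain ⟨t, ht, hp⟩ := hNF
  calc E.μ n = E.flow n t := (E.flow_eq_of_p_pos (Finset.mem_Icc.2 ⟨by omega, hn⟩) ht hp).symm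
    _ ≤ E.flow j t := E.flow_le_flow hj hjn (by omega) ht
    _ ≤ E.μ j := E.flow_le (Finset.mem_Icc.2 ⟨hj, by omega⟩) ht

theorem q_add_flow_le_flow (hk : 1 ≤ k) (hkj : k < j) (hj : j ≤ E.N + 1)
    (ht : t ∈ Set.Icc 0 E.T) : E.q k t + E.flow j t ≤ E.flow k t := by
  rw [E.flow_eq_add hkj.le hj]
  gcongr
  refine Finset.single_le_sum (f := fun l => E.q l t) (fun l hl => E.q_nonneg ?_ ht)
    (Finset.mem_Ico.2 ⟨le_rfl, hkj⟩)
  rw [Finset.mem_Ico] at hl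
  exact Finset.mem_Icc.2 ⟨by omega, by omega⟩

theorem level_lt_of_p_pos_of_q_pos (hn : 1 ≤ n) (hl : l ∈ Finset.Icc (n + 1) E.N)
    (ht : t ∈ Set.Icc 0 E.T) (hp : 0 < E.p (n + 1) t) (hq : 0 < E.q l t) :
    E.level n < E.level l := by
  obtain ⟨hnl, hlN⟩ := Finset.mem_Icc.1 hl
  calc E.level n ≤ E.s t + E.cumPrice n t := E.level_le (Finset.mem_Icc.2 ⟨hn, by omega⟩) ht
    _ < E.s t + E.cumPrice (n + 1) t := by rw [E.cumPrice_succ]; linarith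
    _ ≤ E.s t + E.cumPrice l t := by gcongr; exact E.cumPrice_le_cumPrice hnl hlN ht
    _ = E.level l := (E.level_eq (Finset.mem_Icc.2 ⟨by omega, hlN⟩) ht hq).symm

theorem exists_p_pos_of_level_lt (hk : k ∈ Finset.Icc 1 E.N) (hl : l ≤ E.N) (hkl : k ≤ l)
    (ht : t ∈ Set.Icc 0 E.T) (hq : 0 < E.q k t) (h : E.level k < E.level l) :
    ∃ j ∈ Finset.Ioc k l, 0 < E.p j t := by
  refine E.exists_p_pos_of_cumPrice_lt hkl ?_
  have h1 := E.level_eq hk ht hq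
  have h2 := E.level_le (Finset.mem_Icc.2 ⟨(Finset.mem_Icc.1 hk).1.trans hkl, hl⟩) ht
  linarith

/-- If the two levels agreed, then at a time `t'` when `n + 1` charges, every flowing origin lies
beyond the first bottleneck `j` charging at a time `t₀` when origin `n + 1` flows; comparing the
flows through `n + 1` and `j` at `t'` and at `t₀` gives `μ (n + 1) ≤ μ j < μ (n + 1)`. -/
theorem level_lt_level_succ (hn : 1 ≤ n) (hnN : n + 1 ≤ E.N)
    (hNF : NonFalse E.T E.p (n + 1)) : E.level n < E.level (n + 1) := by
  have hn' : n + 1 ∈ Finset.Icc 1 E.N := Finset.mem_Icc.2 ⟨by omega, hnN⟩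
  refine (E.level_le_level hn n.le_succ hn').lt_of_ne fun hlev => ?_
  obtain ⟨t', ht', hp'⟩ := hNF
  obtain ⟨t₀, ht₀, hq₀⟩ := E.exists_q_pos hn'
  have hprice : ∀ l ∈ Finset.Icc (n + 1) E.N, 0 < E.q l t' →
      ∃ j ∈ Finset.Ioc (n + 1) l, 0 < E.p j t₀ := fun l hl hq =>
    E.exists_p_pos_of_level_lt hn' (Finset.mem_Icc.1 hl).2 (Finset.mem_Icc.1 hl).1 ht₀ hq₀
      (hlev ▸ E.level_lt_of_p_pos_of_q_pos hn hl ht' hp' hq)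
  have hex : ∃ j, n + 1 < j ∧ j ≤ E.N ∧ 0 < E.p j t₀ := by
    obtain ⟨l, hl, hq⟩ := E.exists_q_pos_of_flow_pos
      ((E.flow_eq_of_p_pos hn' ht' hp').symm ▸ E.capacity_pos hn')
    obtain ⟨j, hj, hp⟩ := hprice l hl hq
    obtain ⟨hnj, hjl⟩ := Finset.mem_Ioc.1 hj
    exact ⟨j, hnj, hjl.trans (Finset.mem_Icc.1 hl).2, hp⟩
  obtain ⟨hj, hjN, hpj⟩ := Nat.find_spec hex
  have hj' : Nat.find hex ∈ Finset.Icc 1 E.N := Finset.mem_Icc.2 ⟨by omega, hjN⟩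
  have hidle : ∀ l, n + 1 ≤ l → l < Nat.find hex → E.q l t' = 0 := by
    intro l h1 h2
    refine le_antisymm (not_lt.1 fun hq => ?_)
      (E.q_nonneg (Finset.mem_Icc.2 ⟨by omega, by omega⟩) ht')
    obtain ⟨j, hj, hp⟩ := hprice l (Finset.mem_Icc.2 ⟨h1, by omega⟩) hq
    obtain ⟨hnj, hjl⟩ := Finset.mem_Ioc.1 hj
    exact Nat.find_min hex (hjl.trans_lt h2) ⟨hnj, by omega, hp⟩
  refine lt_irrefl (E.μ (n + 1)) ?_
  calc E.μ (n + 1) = E.flow (n + 1) t' := (E.flow_eq_of_p_pos hn' ht' hp').symm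
    _ = E.flow (Nat.find hex) t' := E.flow_eq_flow_of_q_eq_zero hj.le (by omega) hidle
    _ ≤ E.μ (Nat.find hex) := E.flow_le hj' ht'
    _ = E.flow (Nat.find hex) t₀ := (E.flow_eq_of_p_pos hj' ht₀ hpj).symm
    _ < E.q (n + 1) t₀ + E.flow (Nat.find hex) t₀ := lt_add_of_pos_left _ hq₀
    _ ≤ E.flow (n + 1) t₀ := E.q_add_flow_le_flow (by omega) hj (by omega) ht₀
    _ ≤ E.μ (n + 1) := E.flow_le hn' ht₀

theorem level_lt_of_nonFalse (hl : 1 ≤ l) (hln : l < n) (hn : n ≤ E.N)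
    (hNF : NonFalse E.T E.p n) : E.level l < E.level n := by
  obtain ⟨n, rfl⟩ := Nat.exists_eq_add_of_lt hln
  calc E.level l ≤ E.level (l + n) :=
        E.level_le_level hl (Nat.le_add_right l n) (Finset.mem_Icc.2 ⟨by omega, by omega⟩)
    _ < E.level (l + n + 1) := E.level_lt_level_succ (by omega) hn hNF

/-- The cumulative price rises between `n` and the last origin `l < n` flowing at `t` (`l = 0` if
there is none); a bottleneck where it rises is saturated and carries exactly the flow through `n`.
-/
theorem flow_eq_capacity_of_lt_level (hn : n ∈ Finset.Icc 1 E.N) (hNF : NonFalse E.T E.p n)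
    (ht : t ∈ Set.Icc 0 E.T) (hst : E.s t < E.level n) : E.flow n t = E.μ n := by
  obtain ⟨hn1, hnN⟩ := Finset.mem_Icc.1 hn
  set l := Nat.findGreatest (fun l => 1 ≤ l ∧ 0 < E.q l t) (n - 1) with hl
  have hln : l < n := by
    have := Nat.findGreatest_le (P := fun l => 1 ≤ l ∧ 0 < E.q l t) (n - 1)
    omega
  have hidle : ∀ j, l < j → j < n → E.q j t = 0 := fun j h1 h2 =>
    le_antisymm (not_lt.1 fun hq => Nat.findGreatest_is_greatest h1 (by omega) ⟨by omega, hq⟩)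
      (E.q_nonneg (Finset.mem_Icc.2 ⟨by omega, by omega⟩) ht)
  have hcum : E.cumPrice l t < E.cumPrice n t := by
    have hlev := E.level_le hn ht
    rcases Nat.eq_zero_or_pos l with h0 | hpos
    · rw [h0, cumPrice_zero]
      linarith
    · obtain ⟨hl1, hq⟩ := Nat.findGreatest_of_ne_zero hl.symm hpos.ne'
      have := E.level_eq (Finset.mem_Icc.2 ⟨hl1, by omega⟩) ht hq
      have := E.level_lt_of_nonFalse hl1 hln hnN hNF
      linarith
  obtain ⟨j, hj, hp⟩ := E.exists_p_pos_of_cumPrice_lt hln.le hcum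
  obtain ⟨hlj, hjn⟩ := Finset.mem_Ioc.1 hj
  have hj' : j ∈ Finset.Icc 1 E.N := Finset.mem_Icc.2 ⟨by omega, by omega⟩
  refine le_antisymm (E.flow_le hn ht) ?_
  calc E.μ n ≤ E.μ j := E.capacity_le_of_nonFalse hnN hNF (by omega) hjn
    _ = E.flow j t := (E.flow_eq_of_p_pos hj' ht hp).symm
    _ = E.flow n t :=
        E.flow_eq_flow_of_q_eq_zero hjn (by omega) fun i h1 h2 => hidle i (by omega) h2

theorem integrableOn_flow (hk : 1 ≤ k) : IntegrableOn (E.flow k) (Set.Icc 0 E.T) :=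
  integrable_finsetSum _ fun _ hj => E.integrableOn_q
    (Finset.mem_Icc.2 ⟨hk.trans (Finset.mem_Icc.1 hj).1, (Finset.mem_Icc.1 hj).2⟩)

theorem setIntegral_window_q (hj : j ∈ Finset.Icc 1 E.N) (hk : k ∈ Finset.Icc 1 E.N)
    (h : E.level j ≤ E.level k) : ∫ t in Set.Icc (E.tm k) (E.tp k), E.q j t = E.Q j := by
  rw [← E.intervalIntegral_q hj, intervalIntegral.integral_of_le E.T_nonneg,
    ← integral_Icc_eq_integral_Ioc]
  refine (setIntegral_eq_of_subset_of_forall_sdiff_eq_zero measurableSet_Icc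
    (E.window_subset hk) fun t ht => ?_).symm
  exact le_antisymm (not_lt.1 fun hq => ht.2 (E.window_subset_window hj hk h
    (E.mem_window hj ht.1 hq))) (E.q_nonneg hj ht.1)

theorem setIntegral_window_flow_le (hi : i ∈ Finset.Icc 1 E.N) (hk : k ∈ Finset.Icc 1 E.N) :
    ∫ t in Set.Icc (E.tm k) (E.tp k), E.flow i t ≤ E.μ i * (E.tp k - E.tm k) := by
  calc ∫ t in Set.Icc (E.tm k) (E.tp k), E.flow i t
      ≤ ∫ _ in Set.Icc (E.tm k) (E.tp k), E.μ i :=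
        setIntegral_mono_on ((E.integrableOn_flow (Finset.mem_Icc.1 hi).1).mono_set
          (E.window_subset hk)) (integrableOn_const (by simp)) measurableSet_Icc
          fun t ht => E.flow_le hi (E.window_subset hk ht)
    _ = E.μ i * (E.tp k - E.tm k) := by
        rw [setIntegral_const, Real.volume_real_Icc_of_le (E.tm_lt_tp hk).le, smul_eq_mul, mul_comm]

theorem setIntegral_window_flow_eq (hn : n ∈ Finset.Icc 1 E.N) (hNF : NonFalse E.T E.p n)
    (hk : k ∈ Finset.Icc 1 E.N) (h : E.level k ≤ E.level n) :
    ∫ t in Set.Icc (E.tm k) (E.tp k), E.flow n t = E.μ n * (E.tp k - E.tm k) := by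
  rw [integral_Icc_eq_integral_Ioo, setIntegral_congr_fun measurableSet_Ioo (g := fun _ => E.μ n)
    fun t ht => ?_, setIntegral_const, Real.volume_real_Ioo_of_le (E.tm_lt_tp hk).le,
    smul_eq_mul, mul_comm]
  have htT := E.window_subset hk (Set.Ioo_subset_Icc_self ht)
  exact E.flow_eq_capacity_of_lt_level hn hNF htT
    (((E.mem_window_interior_iff hk htT).1 ht).trans_le h)

def lastNonFalse (m : ℕ) : ℕ := Nat.findGreatest (NonFalse E.T E.p) m

def next (m : ℕ) : ℕ :=
  if ∃ n, m < n ∧ n ≤ E.N ∧ NonFalse E.T E.p n then nextNF E.N E.T E.p m else E.N + 1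

/-- Capacities extended by `μ (N + 1) = 0`, under which both cases of `Qbar` share one formula. -/
def cap (n : ℕ) : ℝ := if n ≤ E.N then E.μ n else 0

theorem lastNonFalse_mem (hm : m ∈ Finset.Icc 1 E.N) :
    E.lastNonFalse m ∈ Finset.Icc 1 E.N :=
  Finset.mem_Icc.2 ⟨Nat.le_findGreatest (Finset.mem_Icc.1 hm).1 E.nonFalse_one,
    (Nat.findGreatest_le m).trans (Finset.mem_Icc.1 hm).2⟩

theorem lastNonFalse_le (m : ℕ) : E.lastNonFalse m ≤ m := Nat.findGreatest_le m

theorem nonFalse_lastNonFalse (hm : 1 ≤ m) : NonFalse E.T E.p (E.lastNonFalse m) :=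
  Nat.findGreatest_spec hm E.nonFalse_one

theorem lastNonFalse_lt_of_not_nonFalse (hm : 1 ≤ m) (hNF : ¬NonFalse E.T E.p m) :
    E.lastNonFalse m < m :=
  (E.lastNonFalse_le m).lt_of_ne fun h => hNF (h ▸ E.nonFalse_lastNonFalse hm)

theorem lastNonFalse_eq (hNF : NonFalse E.T E.p m) : E.lastNonFalse m = m :=
  Nat.findGreatest_eq hNF

theorem not_nonFalse_of_lastNonFalse_lt (h : E.lastNonFalse m < j) (hjm : j ≤ m) :
    ¬NonFalse E.T E.p j :=
  Nat.findGreatest_is_greatest h hjm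

theorem nextNF_spec (hex : ∃ n, m < n ∧ n ≤ E.N ∧ NonFalse E.T E.p n) :
    m < nextNF E.N E.T E.p m ∧ nextNF E.N E.T E.p m ≤ E.N ∧
      NonFalse E.T E.p (nextNF E.N E.T E.p m) :=
  Nat.sInf_mem hex

theorem next_spec (hm : m ≤ E.N) :
    m < E.next m ∧ E.next m ≤ E.N + 1 ∧ (E.next m ≤ E.N → NonFalse E.T E.p (E.next m)) ∧
      ∀ j, m < j → j < E.next m → ¬NonFalse E.T E.p j := by
  unfold next
  split_ifs with hex
  · obtain ⟨hmn, hnN, hNF⟩ := E.nextNF_spec hex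
    exact ⟨hmn, by omega, fun _ => hNF, fun j h1 h2 hj =>
      Nat.notMem_of_lt_sInf h2 ⟨h1, h2.le.trans hnN, hj⟩⟩
  · exact ⟨by omega, le_rfl, fun h => absurd h (by omega), fun j h1 h2 hj =>
      hex ⟨j, h1, by omega, hj⟩⟩

theorem next_eq_nextNF (hex : ∃ n, m < n ∧ n ≤ E.N ∧ NonFalse E.T E.p n) :
    E.next m = nextNF E.N E.T E.p m :=
  if_pos hex

theorem cap_eq (hn : n ≤ E.N) : E.cap n = E.μ n := if_pos hn

theorem cap_next_eq (hex : ∃ n, m < n ∧ n ≤ E.N ∧ NonFalse E.T E.p n) :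
    E.cap (E.next m) = E.μ (nextNF E.N E.T E.p m) := by
  rw [E.next_eq_nextNF hex, E.cap_eq (E.nextNF_spec hex).2.1]

theorem Qbar_eq : Qbar E.N E.T E.μ E.Q E.p m =
    (∑ j ∈ Finset.Ico m (E.next m), E.Q j) / (E.μ m - E.cap (E.next m)) := by
  unfold Qbar cap
  by_cases hex : ∃ n, m < n ∧ n ≤ E.N ∧ NonFalse E.T E.p n
  · obtain ⟨hmn, hnN, -⟩ := E.nextNF_spec hex
    rw [if_pos hex, E.next_eq_nextNF hex, if_pos hnN, ← Finset.Ico_add_one_right_eq_Icc,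
      Nat.sub_add_cancel (by omega)]
  · unfold next
    rw [if_neg hex, if_neg hex, if_neg (by omega), sub_zero, Finset.Ico_add_one_right_eq_Icc]

theorem setIntegral_window_flow_cap (hk : k ∈ Finset.Icc 1 E.N) (hkn : k ≤ n)
    (hn : n ≤ E.N + 1) (hNF : n ≤ E.N → NonFalse E.T E.p n) :
    ∫ t in Set.Icc (E.tm k) (E.tp k), E.flow n t = E.cap n * (E.tp k - E.tm k) := by
  rcases hn.lt_or_eq with hn | rfl
  · have hn' : n ∈ Finset.Icc 1 E.N :=
      Finset.mem_Icc.2 ⟨(Finset.mem_Icc.1 hk).1.trans hkn, by omega⟩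
    rw [E.cap_eq (by omega), E.setIntegral_window_flow_eq hn' (hNF (by omega)) hk
      (E.level_le_level (Finset.mem_Icc.1 hk).1 hkn hn')]
  · simp [flow, cap]

theorem setIntegral_window_flow_lastNonFalse (hm : m ∈ Finset.Icc 1 E.N) :
    ∫ t in Set.Icc (E.tm (E.lastNonFalse m)) (E.tp (E.lastNonFalse m)), E.flow m t =
      ∑ j ∈ Finset.Ico m (E.next m), E.Q j +
        E.cap (E.next m) * (E.tp (E.lastNonFalse m) - E.tm (E.lastNonFalse m)) := by
  obtain ⟨hm1, hmN⟩ := Finset.mem_Icc.1 hm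
  obtain ⟨hmn, hnN, hnNF, hgap⟩ := E.next_spec hmN
  have hk := E.lastNonFalse_mem hm
  have hmem : ∀ j ∈ Finset.Ico m (E.next m), j ∈ Finset.Icc 1 E.N := fun j hj => by
    rw [Finset.mem_Ico] at hj
    exact Finset.mem_Icc.2 ⟨by omega, by omega⟩
  have hlevel : ∀ j ∈ Finset.Ico m (E.next m), E.level j ≤ E.level (E.lastNonFalse m) :=
    fun j hj => (E.level_eq_of_not_nonFalse hk ((E.lastNonFalse_le m).trans (Finset.mem_Ico.1 hj).1)
      (Finset.mem_Icc.1 (hmem j hj)).2 fun l h1 h2 => (le_or_gt l m).elim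
        (E.not_nonFalse_of_lastNonFalse_lt h1)
        fun h => hgap l h (h2.trans_lt (Finset.mem_Ico.1 hj).2)).le
  have hsub := E.window_subset hk
  rw [show E.flow m = fun t => ∑ j ∈ Finset.Ico m (E.next m), E.q j t + E.flow (E.next m) t from
      funext (E.flow_eq_add hmn.le hnN),
    integral_add (integrable_finsetSum _ fun j hj => (E.integrableOn_q (hmem j hj)).mono_set hsub)
      ((E.integrableOn_flow (by omega)).mono_set hsub),
    integral_finsetSum _ fun j hj => (E.integrableOn_q (hmem j hj)).mono_set hsub,
    Finset.sum_congr rfl fun j hj => E.setIntegral_window_q (hmem j hj) hk (hlevel j hj),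
    E.setIntegral_window_flow_cap hk ((E.lastNonFalse_le m).trans hmn.le) hnN hnNF]

theorem sum_demand_add_cap_mul_le (hm : m ∈ Finset.Icc 1 E.N) :
    ∑ j ∈ Finset.Ico m (E.next m), E.Q j +
        E.cap (E.next m) * (E.tp (E.lastNonFalse m) - E.tm (E.lastNonFalse m)) ≤
      E.μ m * (E.tp (E.lastNonFalse m) - E.tm (E.lastNonFalse m)) :=
  E.setIntegral_window_flow_lastNonFalse hm ▸
    E.setIntegral_window_flow_le hm (E.lastNonFalse_mem hm)

theorem sum_demand_add_cap_mul_eq (hm : m ∈ Finset.Icc 1 E.N) (hNF : NonFalse E.T E.p m) :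
    ∑ j ∈ Finset.Ico m (E.next m), E.Q j + E.cap (E.next m) * (E.tp m - E.tm m) =
      E.μ m * (E.tp m - E.tm m) := by
  have h := E.setIntegral_window_flow_lastNonFalse hm
  rw [E.lastNonFalse_eq hNF, E.setIntegral_window_flow_eq hm hNF hm le_rfl] at h
  exact h.symm

theorem cap_next_lt (hm : m ∈ Finset.Icc 1 E.N) : E.cap (E.next m) < E.μ m := by
  obtain ⟨hm1, hmN⟩ := Finset.mem_Icc.1 hm
  obtain ⟨hmn, hnN, -, -⟩ := E.next_spec hmN
  have hQ : 0 < ∑ j ∈ Finset.Ico m (E.next m), E.Q j :=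
    Finset.sum_pos (fun j hj => E.demand_pos (Finset.mem_Icc.2
      ⟨hm1.trans (Finset.mem_Ico.1 hj).1, by have := (Finset.mem_Ico.1 hj).2; omega⟩))
      ⟨m, Finset.mem_Ico.2 ⟨le_rfl, hmn⟩⟩
  have hw := sub_pos.2 (E.tm_lt_tp (E.lastNonFalse_mem hm))
  nlinarith [E.sum_demand_add_cap_mul_le hm]

theorem Qbar_le_width (hm : m ∈ Finset.Icc 1 E.N) :
    Qbar E.N E.T E.μ E.Q E.p m ≤ E.tp (E.lastNonFalse m) - E.tm (E.lastNonFalse m) := by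
  rw [E.Qbar_eq, div_le_iff₀ (sub_pos.2 (E.cap_next_lt hm))]
  linarith [E.sum_demand_add_cap_mul_le hm]

theorem Qbar_eq_width (hm : m ∈ Finset.Icc 1 E.N) (hNF : NonFalse E.T E.p m) :
    Qbar E.N E.T E.μ E.Q E.p m = E.tp m - E.tm m := by
  rw [E.Qbar_eq, div_eq_iff (sub_pos.2 (E.cap_next_lt hm)).ne']
  linarith [E.sum_demand_add_cap_mul_eq hm hNF]

end CorridorEquilibrium

/-- a bottleneck `i` is non-false iff every downstream bottleneck
`m < i` has strictly smaller normalized demand; moreover, whenever the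
normalized demand of `k` involves the denominator `μ k − μ (n k)`, that
denominator is strictly positive. -/
theorem stmt4 (N : ℕ) (T td : ℝ) (μ Q c : ℕ → ℝ) (s : ℝ → ℝ)
    (q p : ℕ → ℝ → ℝ) (ρ : ℕ → ℝ) (tm tp : ℕ → ℝ)
    (hnet : CorridorNet N T td μ Q c s)
    (heq : IsPricingEq N T μ Q c s q p ρ)
    (hwin : ∀ i ∈ Finset.Icc 1 N, IsWindow T (q i) (tm i) (tp i))
    (hreg : ∀ i ∈ Finset.Icc 1 N, s (tm i) = ρ i - c i ∧ s (tp i) = ρ i - c i)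
    :
    (∀ k ∈ Finset.Icc 1 N, (∃ m, k < m ∧ m ≤ N ∧ NonFalse T p m) →
      0 < μ k - μ (nextNF N T p k)) ∧
    (∀ i ∈ Finset.Icc 1 N,
      (NonFalse T p i ↔
        ∀ m, 1 ≤ m → m < i → Qbar N T μ Q p m < Qbar N T μ Q p i)) := by
  let E : CorridorEquilibrium := ⟨N, T, td, μ, Q, c, s, q, p, ρ, tm, tp, hnet, heq, hwin, hreg⟩
  refine ⟨fun k hk hex => ?_, fun i hi => ?_⟩
  · have h := E.cap_next_lt hk
    rw [E.cap_next_eq hex] at h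
    exact sub_pos.2 h
  obtain ⟨hi1, hiN⟩ := Finset.mem_Icc.1 hi
  constructor
  · intro hNF m hm hmi
    have hm' : m ∈ Finset.Icc 1 N := Finset.mem_Icc.2 ⟨hm, by omega⟩
    have hk := E.lastNonFalse_mem hm'
    calc Qbar N T μ Q p m ≤ E.tp (E.lastNonFalse m) - E.tm (E.lastNonFalse m) :=
          E.Qbar_le_width hm'
      _ < tp i - tm i := E.width_lt_width hk hi (E.level_lt_of_nonFalse
          (Finset.mem_Icc.1 hk).1 ((E.lastNonFalse_le m).trans_lt hmi) hiN hNF)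
      _ = Qbar N T μ Q p i := (E.Qbar_eq_width hi hNF).symm
  · intro hlt
    by_contra hNF
    have hk := E.lastNonFalse_mem hi
    refine (hlt _ (Finset.mem_Icc.1 hk).1 (E.lastNonFalse_lt_of_not_nonFalse hi1 hNF)).not_ge ?_
    calc Qbar N T μ Q p i ≤ E.tp (E.lastNonFalse i) - E.tm (E.lastNonFalse i) :=
          E.Qbar_le_width hi
      _ = Qbar N T μ Q p (E.lastNonFalse i) :=
          (E.Qbar_eq_width hk (E.nonFalse_lastNonFalse hi1)).symm
end
end

section
/- In a pricing equilibrium of a reduced morning-commute corridor network (one in which every bottleneck is non-false), the arrival-time windows are strictly nested: for every i ∈ {1,…,N−1}, 𝒯_i ⊂ 𝒯_{i+1}, i.e. t_{i+1}^- < t_i^- and t_i^+ < t_{i+1}^+. -/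
/-!
Write `v i = ρ i - c i`; by regularity, `v i` is the schedule delay at both ends of window `i`.
When origin `j` travels, the tolls it pays at bottlenecks `i + 1, …, j` are at most `v j - v i`,
so `v` is nondecreasing. In a reduced network it is strictly increasing: if `v (i + 1) = v i`,
let `m` be the last origin with `v m = v i`. Whenever bottleneck `i + 1` is tolled, origins
`i + 1, …, m` do not travel, so `μ (i + 1) ≤ μ (m + 1)`; whenever `m` travels, bottleneck `m + 1`
is tolled and saturated by the origins upstream of `m` alone, so `μ (m + 1) < μ (i + 1)`.
Since `Q i > 0`, every window has positive length, and as `s` is strictly quasi-convex with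
minimum at `td` it straddles `td`; `s` is strictly decreasing before `td` and strictly increasing
after it, so `v i < v (i + 1)` pushes both ends of window `i + 1` beyond those of window `i`.
-/

open MeasureTheory Finset Set
open scoped Classical

noncomputable section

namespace StrictQuasiconvexOn

variable {I : Set ℝ} {s : ℝ → ℝ} {a b d : ℝ}

theorem lt_max_of_lt_of_lt (hs : StrictQuasiconvexOn I s) (ha : a ∈ I) (hd : d ∈ I)
    (hab : a < b) (hbd : b < d) : s b < max (s a) (s d) := by
  have hda : 0 < d - a := by linarith
  have hb : (d - b) / (d - a) * a + (1 - (d - b) / (d - a)) * d = b := by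
    field_simp; ring
  have hl : (d - b) / (d - a) ∈ Set.Ioo (0:ℝ) 1 :=
    ⟨div_pos (by linarith) hda, (div_lt_one hda).2 (by linarith)⟩
  simpa only [hb] using hs a ha d hd (hab.trans hbd).ne _ hl

theorem lt_of_isMinOn (hs : StrictQuasiconvexOn I s) (hI : I.OrdConnected)
    (hmin : IsMinOn s I d) (hd : d ∈ I) (hb : b ∈ I) (hbd : b ≠ d) : s d < s b := by
  -- The midpoint `m` of `b` and `d` satisfies `s d ≤ s m < max (s b) (s d) = s b`.
  have hmin' := isMinOn_iff.1 hmin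
  have hdb : s d ≤ s b := hmin' b hb
  rcases hbd.lt_or_gt with hlt | hlt
  · have hm := hs.lt_max_of_lt_of_lt hb hd (left_lt_add_div_two.2 hlt) (add_div_two_lt_right.2 hlt)
    have hmI : (b + d) / 2 ∈ I := hI.out hb hd ⟨by linarith, by linarith⟩
    linarith [max_eq_left hdb, hmin' _ hmI]
  · have hm := hs.lt_max_of_lt_of_lt hd hb (left_lt_add_div_two.2 hlt) (add_div_two_lt_right.2 hlt)
    have hmI : (d + b) / 2 ∈ I := hI.out hd hb ⟨by linarith, by linarith⟩
    linarith [max_eq_right hdb, hmin' _ hmI]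

theorem strictAntiOn_of_isMinOn (hs : StrictQuasiconvexOn I s) (hI : I.OrdConnected)
    (hmin : IsMinOn s I d) (hd : d ∈ I) : StrictAntiOn s (I ∩ Set.Iic d) := by
  rintro a ⟨ha, -⟩ b ⟨hb, hbd : b ≤ d⟩ hab
  rcases hbd.lt_or_eq with hbd | rfl
  · simpa only [max_eq_left (isMinOn_iff.1 hmin a ha)] using hs.lt_max_of_lt_of_lt ha hd hab hbd
  · exact hs.lt_of_isMinOn hI hmin hd ha hab.ne

theorem strictMonoOn_of_isMinOn (hs : StrictQuasiconvexOn I s) (hI : I.OrdConnected)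
    (hmin : IsMinOn s I d) (hd : d ∈ I) : StrictMonoOn s (I ∩ Set.Ici d) := by
  rintro a ⟨ha, hda : d ≤ a⟩ b ⟨hb, -⟩ hab
  rcases hda.lt_or_eq with hda | rfl
  · simpa only [max_eq_right (isMinOn_iff.1 hmin b hb)] using hs.lt_max_of_lt_of_lt hd hb hda hab
  · exact hs.lt_of_isMinOn hI hmin ha hb hab.ne'

theorem lt_and_lt_of_apply_eq (hs : StrictQuasiconvexOn I s) (hI : I.OrdConnected)
    (hmin : IsMinOn s I d) (hd : d ∈ I) (ha : a ∈ I) (hb : b ∈ I) (hab : a < b)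
    (heq : s a = s b) : a < d ∧ d < b := by
  constructor
  · by_contra! hda
    exact (hs.strictMonoOn_of_isMinOn hI hmin hd ⟨ha, hda⟩ ⟨hb, hda.trans hab.le⟩ hab).ne heq
  · by_contra! hbd
    exact (hs.strictAntiOn_of_isMinOn hI hmin hd ⟨ha, hab.le.trans hbd⟩ ⟨hb, hbd⟩ hab).ne' heq

end StrictQuasiconvexOn

namespace IsWindow

variable {T a b : ℝ} {f : ℝ → ℝ}

theorem Icc_subset (h : IsWindow T f a b) : Set.Icc a b ⊆ Set.Icc 0 T :=
  h.2.2 0 T fun _ ht => ht.1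

theorem left_mem (h : IsWindow T f a b) : a ∈ Set.Icc 0 T :=
  h.Icc_subset (Set.left_mem_Icc.2 h.1)

theorem right_mem (h : IsWindow T f a b) : b ∈ Set.Icc 0 T :=
  h.Icc_subset (Set.right_mem_Icc.2 h.1)

theorem exists_pos (h : IsWindow T f a b) : ∃ t ∈ Set.Icc (0:ℝ) T, 0 < f t := by
  by_contra! hf
  have hab := h.2.2 1 0 (fun t ht => absurd ht.2 (hf t ht.1).not_gt) (Set.left_mem_Icc.2 h.1)
  linarith [hab.1, hab.2]

theorem lt_of_integral_ne_zero (h : IsWindow T f a b) (hf : ∀ t ∈ Set.Icc 0 T, 0 ≤ f t)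
    (hint : ∫ t in (0:ℝ)..T, f t ≠ 0) : a < b := by
  refine h.1.lt_of_ne fun hab => hint ?_
  subst hab
  have hT : (0:ℝ) ≤ T := h.left_mem.1.trans h.left_mem.2
  calc ∫ t in (0:ℝ)..T, f t = ∫ _ in (0:ℝ)..T, (0:ℝ) := by
        refine intervalIntegral.integral_congr_ae ?_
        filter_upwards [volume.ae_ne a] with t hta ht
        have htI : t ∈ Set.Icc 0 T := Set.Ioc_subset_Icc_self (Set.uIoc_of_le hT ▸ ht)
        refine le_antisymm (not_lt.1 fun hpos => hta ?_) (hf t htI)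
        exact le_antisymm (h.2.1 ⟨htI, hpos⟩).2 (h.2.1 ⟨htI, hpos⟩).1
    _ = 0 := intervalIntegral.integral_zero

end IsWindow

theorem Finset.sum_Icc_one_add_sum_Ioc {M : Type*} [AddCommMonoid M] (f : ℕ → M) {i j : ℕ}
    (hij : i ≤ j) : ∑ k ∈ Finset.Icc 1 i, f k + ∑ k ∈ Finset.Ioc i j, f k =
      ∑ k ∈ Finset.Icc 1 j, f k := by
  simpa only [← Finset.Icc_add_one_left_eq_Ioc, zero_add] using
    Finset.sum_Ioc_consecutive f (Nat.zero_le i) hij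

namespace IsPricingEq

variable {N : ℕ} {T : ℝ} {μ Q c : ℕ → ℝ} {s : ℝ → ℝ} {q p : ℕ → ℝ → ℝ} {ρ : ℕ → ℝ}
  {i j m : ℕ} {t : ℝ}

theorem flow_nonneg (heq : IsPricingEq N T μ Q c s q p ρ) (hi : 1 ≤ i) (hiN : i ≤ N)
    (ht : t ∈ Set.Icc 0 T) : 0 ≤ q i t :=
  (heq.2.2.1 i (Finset.mem_Icc.2 ⟨hi, hiN⟩) t ht).1

theorem price_nonneg (heq : IsPricingEq N T μ Q c s q p ρ) (hi : 1 ≤ i) (hiN : i ≤ N)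
    (ht : t ∈ Set.Icc 0 T) : 0 ≤ p i t :=
  (heq.2.2.1 i (Finset.mem_Icc.2 ⟨hi, hiN⟩) t ht).2

theorem le_cost (heq : IsPricingEq N T μ Q c s q p ρ) (hi : 1 ≤ i) (hiN : i ≤ N)
    (ht : t ∈ Set.Icc 0 T) : ρ i ≤ s t + c i + ∑ j ∈ Finset.Icc 1 i, p j t :=
  (heq.2.2.2.1 i (Finset.mem_Icc.2 ⟨hi, hiN⟩) t ht).1

theorem cost_eq (heq : IsPricingEq N T μ Q c s q p ρ) (hi : 1 ≤ i) (hiN : i ≤ N)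
    (ht : t ∈ Set.Icc 0 T) (hq : 0 < q i t) : s t + c i + ∑ j ∈ Finset.Icc 1 i, p j t = ρ i :=
  (heq.2.2.2.1 i (Finset.mem_Icc.2 ⟨hi, hiN⟩) t ht).2 hq

theorem load_le (heq : IsPricingEq N T μ Q c s q p ρ) (hi : 1 ≤ i) (hiN : i ≤ N)
    (ht : t ∈ Set.Icc 0 T) : ∑ j ∈ Finset.Icc i N, q j t ≤ μ i :=
  (heq.2.2.2.2.1 i (Finset.mem_Icc.2 ⟨hi, hiN⟩) t ht).1

theorem load_eq (heq : IsPricingEq N T μ Q c s q p ρ) (hi : 1 ≤ i) (hiN : i ≤ N)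
    (ht : t ∈ Set.Icc 0 T) (hp : 0 < p i t) : ∑ j ∈ Finset.Icc i N, q j t = μ i :=
  (heq.2.2.2.2.1 i (Finset.mem_Icc.2 ⟨hi, hiN⟩) t ht).2 hp

theorem integral_flow (heq : IsPricingEq N T μ Q c s q p ρ) (hi : 1 ≤ i) (hiN : i ≤ N) :
    ∫ t in (0:ℝ)..T, q i t = Q i :=
  heq.2.2.2.2.2 i (Finset.mem_Icc.2 ⟨hi, hiN⟩)

theorem sum_price_le_of_flow_pos (heq : IsPricingEq N T μ Q c s q p ρ) (hi : 1 ≤ i)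
    (hij : i ≤ j) (hjN : j ≤ N) (ht : t ∈ Set.Icc 0 T) (hq : 0 < q j t) :
    ∑ k ∈ Finset.Ioc i j, p k t ≤ (ρ j - c j) - (ρ i - c i) := by
  have hle := heq.le_cost hi (hij.trans hjN) ht
  have hcost := heq.cost_eq (hi.trans hij) hjN ht hq
  rw [← Finset.sum_Icc_one_add_sum_Ioc _ hij] at hcost
  linarith

theorem sub_le_sum_price_of_flow_pos (heq : IsPricingEq N T μ Q c s q p ρ) (hi : 1 ≤ i)
    (hij : i ≤ j) (hjN : j ≤ N) (ht : t ∈ Set.Icc 0 T) (hq : 0 < q i t) :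
    (ρ j - c j) - (ρ i - c i) ≤ ∑ k ∈ Finset.Ioc i j, p k t := by
  have hle := heq.le_cost (hi.trans hij) hjN ht
  have hcost := heq.cost_eq hi (hij.trans hjN) ht hq
  rw [← Finset.sum_Icc_one_add_sum_Ioc _ hij] at hle
  linarith

theorem sub_le_sub_of_le (heq : IsPricingEq N T μ Q c s q p ρ) (hi : 1 ≤ i) (hij : i ≤ j)
    (hjN : j ≤ N) (hact : ∃ t ∈ Set.Icc 0 T, 0 < q j t) : ρ i - c i ≤ ρ j - c j := by
  obtain ⟨t, ht, hq⟩ := hact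
  have hsum := heq.sum_price_le_of_flow_pos hi hij hjN ht hq
  have hnonneg : 0 ≤ ∑ k ∈ Finset.Ioc i j, p k t := Finset.sum_nonneg fun k hk =>
    heq.price_nonneg (hi.trans (Finset.mem_Ioc.1 hk).1.le) ((Finset.mem_Ioc.1 hk).2.trans hjN) ht
  linarith

theorem lt_of_price_pos_of_flow_pos (heq : IsPricingEq N T μ Q c s q p ρ) (hi : 1 ≤ i)
    (hij : i < j) (hjN : j ≤ N) (ht : t ∈ Set.Icc 0 T) (hp : 0 < p (i + 1) t)
    (hq : 0 < q j t) : ρ i - c i < ρ j - c j := by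
  have hsum := heq.sum_price_le_of_flow_pos hi hij.le hjN ht hq
  have hsingle : p (i + 1) t ≤ ∑ k ∈ Finset.Ioc i j, p k t :=
    Finset.single_le_sum (f := (p · t))
      (fun k hk => heq.price_nonneg (by grind) (by grind) ht)
      (Finset.mem_Ioc.2 ⟨Nat.lt_succ_self i, hij⟩)
  linarith

theorem capacity_le_of_price_pos (heq : IsPricingEq N T μ Q c s q p ρ) (hμ : 0 < μ (i + 1))
    (hi : 1 ≤ i) (him : i < m) (hmN : m ≤ N)
    (hv : ∀ j ∈ Finset.Ioc i m, ρ j - c j ≤ ρ i - c i) (ht : t ∈ Set.Icc 0 T)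
    (hp : 0 < p (i + 1) t) : m < N ∧ μ (i + 1) ≤ μ (m + 1) := by
  have hzero : ∑ j ∈ Finset.Ioc i m, q j t = 0 := Finset.sum_eq_zero fun j hj => by
    obtain ⟨hij, hjm⟩ := Finset.mem_Ioc.1 hj
    refine le_antisymm (not_lt.1 fun hq => ?_) (heq.flow_nonneg (by omega) (hjm.trans hmN) ht)
    exact (hv j hj).not_gt (heq.lt_of_price_pos_of_flow_pos hi hij (hjm.trans hmN) ht hp hq)
  have hload : ∑ j ∈ Finset.Ioc m N, q j t = μ (i + 1) := by
    rw [← heq.load_eq (by omega) (by omega) ht hp, Finset.Icc_add_one_left_eq_Ioc,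
      ← Finset.sum_Ioc_consecutive _ him.le hmN, hzero, zero_add]
  have hmN' : m < N := by
    refine hmN.lt_of_ne fun hm => ?_
    rw [hm, Finset.Ioc_self, Finset.sum_empty] at hload
    linarith
  have hle := heq.load_le (i := m + 1) (by omega) hmN' ht
  rw [Finset.Icc_add_one_left_eq_Ioc] at hle
  exact ⟨hmN', hload ▸ hle⟩

theorem capacity_lt_of_flow_pos (heq : IsPricingEq N T μ Q c s q p ρ) (hi : 1 ≤ i)
    (him : i < m) (hmN : m < N) (hv : ρ m - c m < ρ (m + 1) - c (m + 1))
    (ht : t ∈ Set.Icc 0 T) (hq : 0 < q m t) : μ (m + 1) < μ (i + 1) := by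
  have hp : 0 < p (m + 1) t := by
    have hle := heq.sub_le_sum_price_of_flow_pos (j := m + 1) (by omega) m.le_succ hmN ht hq
    rw [Nat.Ioc_succ_singleton, Finset.sum_singleton] at hle
    linarith
  have htight := heq.load_eq (i := m + 1) (by omega) hmN ht hp
  have hload := heq.load_le (i := i + 1) (by omega) (by omega) ht
  have hqm : q m t ≤ ∑ j ∈ Finset.Ioc i m, q j t :=
    Finset.single_le_sum (f := (q · t))
      (fun k hk => heq.flow_nonneg (by grind) (by grind) ht)
      (Finset.mem_Ioc.2 ⟨him, le_rfl⟩)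
  rw [Finset.Icc_add_one_left_eq_Ioc] at htight hload
  rw [← Finset.sum_Ioc_consecutive _ him.le hmN.le] at hload
  linarith

theorem sub_lt_sub_succ (heq : IsPricingEq N T μ Q c s q p ρ)
    (hμ : ∀ j, 1 ≤ j → j ≤ N → 0 < μ j)
    (hact : ∀ j, 1 ≤ j → j ≤ N → ∃ t ∈ Set.Icc 0 T, 0 < q j t) (hi : 1 ≤ i) (hiN : i < N)
    (hpos : ∃ t ∈ Set.Icc 0 T, 0 < p (i + 1) t) : ρ i - c i < ρ (i + 1) - c (i + 1) := by
  by_contra! hle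
  obtain ⟨t, ht, hp⟩ := hpos
  set m := Nat.findGreatest (fun j => ρ j - c j ≤ ρ i - c i) N
  have him : i + 1 ≤ m := Nat.le_findGreatest hiN hle
  have hmN : m ≤ N := Nat.findGreatest_le N
  have hvm : ρ m - c m ≤ ρ i - c i := Nat.findGreatest_spec (P := fun j => ρ j - c j ≤ ρ i - c i) hiN hle
  have hv : ∀ j ∈ Finset.Ioc i m, ρ j - c j ≤ ρ i - c i := fun j hj =>
    (heq.sub_le_sub_of_le (by grind) (Finset.mem_Ioc.1 hj).2 hmN
      (hact m (by omega) hmN)).trans hvm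
  obtain ⟨hmN', hcap⟩ := heq.capacity_le_of_price_pos (hμ (i + 1) (by omega) hiN) hi him hmN hv ht hp
  have hvm' : ρ m - c m < ρ (m + 1) - c (m + 1) :=
    hvm.trans_lt (not_le.1 (Nat.findGreatest_is_greatest (Nat.lt_succ_self m) hmN'))
  obtain ⟨t', ht', hq⟩ := hact m (by omega) hmN
  exact (heq.capacity_lt_of_flow_pos hi him hmN' hvm' ht' hq).not_ge hcap

end IsPricingEq

/-- in a reduced network (every bottleneck non-false) the
arrival-time windows are strictly nested. -/
theorem stmt5 (N : ℕ) (T td : ℝ) (μ Q c : ℕ → ℝ) (s : ℝ → ℝ)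
    (q p : ℕ → ℝ → ℝ) (ρ : ℕ → ℝ) (tm tp : ℕ → ℝ)
    (hnet : CorridorNet N T td μ Q c s)
    (heq : IsPricingEq N T μ Q c s q p ρ)
    (hwin : ∀ i ∈ Finset.Icc 1 N, IsWindow T (q i) (tm i) (tp i))
    (hreg : ∀ i ∈ Finset.Icc 1 N, s (tm i) = ρ i - c i ∧ s (tp i) = ρ i - c i)
    (hred : ∀ i ∈ Finset.Icc 1 N, NonFalse T p i)
    :
    ∀ i, 1 ≤ i → i < N → tm (i + 1) < tm i ∧ tp i < tp (i + 1) := by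
  obtain ⟨-, -, htd, hdata, -, hs0, hstd, hqc⟩ := hnet
  have hs : StrictQuasiconvexOn (Set.Icc 0 T) s := hqc
  have htdI : td ∈ Set.Icc 0 T := Set.Ioo_subset_Icc_self htd
  have hmin : IsMinOn s (Set.Icc 0 T) td := isMinOn_iff.2 fun t ht => hstd ▸ hs0 t ht
  have hact j (hj : 1 ≤ j) (hjN : j ≤ N) := (hwin j (Finset.mem_Icc.2 ⟨hj, hjN⟩)).exists_pos
  have hstraddle j (hj : 1 ≤ j) (hjN : j ≤ N) : tm j < td ∧ td < tp j := by
    have hjI := Finset.mem_Icc.2 ⟨hj, hjN⟩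
    have hw := hwin j hjI
    have hlt := hw.lt_of_integral_ne_zero (fun t ht => heq.flow_nonneg hj hjN ht)
      (heq.integral_flow hj hjN ▸ (hdata j hjI).2.1.ne')
    exact hs.lt_and_lt_of_apply_eq Set.ordConnected_Icc hmin htdI hw.left_mem hw.right_mem hlt
      ((hreg j hjI).1.trans (hreg j hjI).2.symm)
  intro i hi hiN
  have hiI : i ∈ Finset.Icc 1 N := Finset.mem_Icc.2 ⟨hi, hiN.le⟩
  have hi1I : i + 1 ∈ Finset.Icc 1 N := Finset.mem_Icc.2 ⟨by omega, hiN⟩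
  have hv := heq.sub_lt_sub_succ (fun j hj hjN => (hdata j (Finset.mem_Icc.2 ⟨hj, hjN⟩)).1)
    hact hi hiN (hred (i + 1) hi1I)
  have hsi := hstraddle i hi hiN.le
  have hsi1 := hstraddle (i + 1) (by omega) hiN
  constructor
  · refine ((hs.strictAntiOn_of_isMinOn Set.ordConnected_Icc hmin htdI).lt_iff_gt
      ⟨(hwin i hiI).left_mem, hsi.1.le⟩ ⟨(hwin (i + 1) hi1I).left_mem, hsi1.1.le⟩).1 ?_
    rwa [(hreg i hiI).1, (hreg (i + 1) hi1I).1]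
  · refine ((hs.strictMonoOn_of_isMinOn Set.ordConnected_Icc hmin htdI).lt_iff_lt
      ⟨(hwin i hiI).right_mem, hsi.2.le⟩ ⟨(hwin (i + 1) hi1I).right_mem, hsi1.2.le⟩).1 ?_
    rwa [(hreg i hiI).2, (hreg (i + 1) hi1I).2]
end
end

section
/- In a pricing equilibrium of a reduced morning-commute corridor network (every bottleneck non-false), for each bottleneck i the optimal price satisfies: p_i(t) > 0 for every t in the open interval (t_i^-, t_i^+), and p_i(t) = 0 for every t ∉ [t_i^-, t_i^+]. -/
open MeasureTheory Finset Set
open scoped Classical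

noncomputable section

private lemma sum_split' (f : ℕ → ℝ) {k i : ℕ} (hk : k ≤ i) :
    (∑ j ∈ Finset.Icc 1 i, f j) = (∑ j ∈ Finset.Icc 1 k, f j) + ∑ j ∈ Finset.Ioc k i, f j := by
  have h1 : Finset.Icc 1 i = Finset.Ioc 0 i := Finset.Icc_add_one_left_eq_Ioc 0 i
  have h2 : Finset.Icc 1 k = Finset.Ioc 0 k := Finset.Icc_add_one_left_eq_Ioc 0 k
  rw [h1, h2, Finset.sum_Ioc_consecutive f (Nat.zero_le k) hk]

private lemma sum_head' (f : ℕ → ℝ) {k n : ℕ} (hk : k ≤ n) :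
    (∑ j ∈ Finset.Icc k n, f j) = f k + ∑ j ∈ Finset.Icc (k+1) n, f j := by
  rw [Finset.Icc_add_one_left_eq_Ioc, Finset.Icc_eq_cons_Ioc hk, Finset.sum_cons]

/-- in a reduced network, `p i > 0` inside the open window and
`p i = 0` outside the closed window. -/
theorem stmt6 (N : ℕ) (T td : ℝ) (μ Q c : ℕ → ℝ) (s : ℝ → ℝ)
    (q p : ℕ → ℝ → ℝ) (ρ : ℕ → ℝ) (tm tp : ℕ → ℝ)
    (hnet : CorridorNet N T td μ Q c s)
    (heq : IsPricingEq N T μ Q c s q p ρ)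
    (hwin : ∀ i ∈ Finset.Icc 1 N, IsWindow T (q i) (tm i) (tp i))
    (hreg : ∀ i ∈ Finset.Icc 1 N, s (tm i) = ρ i - c i ∧ s (tp i) = ρ i - c i)
    (hred : ∀ i ∈ Finset.Icc 1 N, NonFalse T p i)
    :
    ∀ i ∈ Finset.Icc 1 N,
      (∀ t ∈ Set.Ioo (tm i) (tp i), 0 < p i t) ∧
      (∀ t ∈ Set.Icc (0:ℝ) T, t ∉ Set.Icc (tm i) (tp i) → p i t = 0) := by
  obtain ⟨hN, hT, htd, hdata, hscont, hs0, hstd, hqc⟩ := hnet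
  obtain ⟨hmeas, hbdd, hnn, hE1, hE2, hE3⟩ := heq
  -- each flow is positive somewhere
  have hqex : ∀ i ∈ Finset.Icc 1 N, ∃ t ∈ Set.Icc (0:ℝ) T, 0 < q i t := by
    intro i hi
    by_contra h
    push_neg at h
    have hzero : Set.EqOn (q i) (fun _ => (0:ℝ)) (Set.uIcc 0 T) := by
      intro t ht
      rw [Set.uIcc_of_le hT.le] at ht
      exact le_antisymm (h t ht) ((hnn i hi t ht).1)
    have h3 := hE3 i hi
    rw [intervalIntegral.integral_congr hzero] at h3
    simp at h3
    linarith [(hdata i hi).2.1]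
  -- capacities strictly decrease (downward induction)
  have hmu : ∀ d m, 1 ≤ m → m + 1 ≤ N → N - m ≤ d → μ (m+1) < μ m := by
    intro d
    induction d with
    | zero => intro m h1 h2 h3; exfalso; omega
    | succ d ih =>
      intro m h1 h2 _
      have hmem1 : m ∈ Finset.Icc 1 N := Finset.mem_Icc.mpr ⟨h1, by omega⟩
      have hmem2 : m + 1 ∈ Finset.Icc 1 N := Finset.mem_Icc.mpr ⟨by omega, h2⟩
      -- partial Lemma E at m+1
      have hlemE : ∀ t ∈ Set.Icc (0:ℝ) T, 0 < p (m+1) t → 0 < q (m+1) t := by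
        intro t ht hpt
        have hbind := (hE2 (m+1) hmem2 t ht).2 hpt
        rcases eq_or_lt_of_le h2 with hN' | hN'
        · rw [← hN', Finset.Icc_self, Finset.sum_singleton] at hbind
          rw [hbind]; exact (hdata (m+1) hmem2).1
        · have h4 : m + 2 ≤ N := hN'
          have hsplit := sum_head' (fun j => q j t) h2
          have hle := (hE2 (m+2) (Finset.mem_Icc.mpr ⟨by omega, h4⟩) t ht).1
          have hlt := ih (m+1) (by omega) h4 (by omega)
          rw [hsplit] at hbind
          linarith
      -- σ m < σ (m+1) from non-falseness of m+1
      obtain ⟨u, hu, hpu⟩ := hred (m+1) hmem2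
      have hqu := hlemE u hu hpu
      have heq1 := (hE1 (m+1) hmem2 u hu).2 hqu
      have hineqm := (hE1 m hmem1 u hu).1
      have hsum1 := Finset.sum_Icc_succ_top (by omega : 1 ≤ m + 1) (fun j => p j u)
      rw [hsum1] at heq1
      have hsig : ρ m - c m < ρ (m+1) - c (m+1) := by linarith
      -- use a time where q m is positive
      obtain ⟨v, hv, hqv⟩ := hqex m hmem1
      have heqm := (hE1 m hmem1 v hv).2 hqv
      have hineq1 := (hE1 (m+1) hmem2 v hv).1
      have hsum2 := Finset.sum_Icc_succ_top (by omega : 1 ≤ m + 1) (fun j => p j v)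
      rw [hsum2] at hineq1
      have hpv : 0 < p (m+1) v := by linarith
      have hbindv := (hE2 (m+1) hmem2 v hv).2 hpv
      have hineq2 := (hE2 m hmem1 v hv).1
      have hsplitv := sum_head' (fun j => q j v) (by omega : m ≤ N)
      rw [hsplitv] at hineq2
      linarith
  have hmult : ∀ m, 1 ≤ m → m + 1 ≤ N → μ (m+1) < μ m :=
    fun m h1 h2 => hmu N m h1 h2 (by omega)
  -- Lemma E: positive price forces positive own flow
  have hlemE : ∀ k ∈ Finset.Icc 1 N, ∀ t ∈ Set.Icc (0:ℝ) T, 0 < p k t → 0 < q k t := by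
    intro k hk t ht hpt
    obtain ⟨hk1, hkN⟩ := Finset.mem_Icc.mp hk
    have hbind := (hE2 k hk t ht).2 hpt
    rcases eq_or_lt_of_le hkN with h | h
    · subst h
      rw [Finset.Icc_self, Finset.sum_singleton] at hbind
      rw [hbind]; exact (hdata k hk).1
    · have h2 : k + 1 ≤ N := h
      have hsplit := sum_head' (fun j => q j t) hkN
      rw [hsplit] at hbind
      have hle := (hE2 (k+1) (Finset.mem_Icc.mpr ⟨by omega, h2⟩) t ht).1
      have hlt := hmult k hk1 h2
      linarith
  -- σ strictly increasing (one step)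
  have hsig : ∀ m, 1 ≤ m → m + 1 ≤ N → ρ m - c m < ρ (m+1) - c (m+1) := by
    intro m h1 h2
    have hmem1 : m ∈ Finset.Icc 1 N := Finset.mem_Icc.mpr ⟨h1, by omega⟩
    have hmem2 : m + 1 ∈ Finset.Icc 1 N := Finset.mem_Icc.mpr ⟨by omega, h2⟩
    obtain ⟨u, hu, hpu⟩ := hred (m+1) hmem2
    have hqu := hlemE (m+1) hmem2 u hu hpu
    have heq1 := (hE1 (m+1) hmem2 u hu).2 hqu
    have hineqm := (hE1 m hmem1 u hu).1
    have hsum1 := Finset.sum_Icc_succ_top (by omega : 1 ≤ m + 1) (fun j => p j u)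
    rw [hsum1] at heq1
    linarith
  -- σ chain
  have hsiglt : ∀ k, 1 ≤ k → ∀ i, k + 1 ≤ i → i ≤ N → ρ k - c k < ρ i - c i := by
    intro k hk i hi
    induction i, hi using Nat.le_induction with
    | base => exact fun h => hsig k hk h
    | succ n hn ih =>
      intro h
      have h1 := hsig n (by omega) h
      have h2 := ih (by omega)
      linarith
  -- window endpoints lie in [0,T]
  have hwsub : ∀ i ∈ Finset.Icc 1 N, Set.Icc (tm i) (tp i) ⊆ Set.Icc (0:ℝ) T := by
    intro i hi
    exact (hwin i hi).2.2 0 T (fun t ht => ht.1)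
  -- windows are nondegenerate
  have hwlt : ∀ i ∈ Finset.Icc 1 N, tm i < tp i := by
    intro i hi
    by_contra hle
    push_neg at hle
    have heqw : tm i = tp i := le_antisymm (hwin i hi).1 hle
    have hmeasset : MeasurableSet {t : ℝ | ¬ q i t = 0} := by
      have : {t : ℝ | ¬ q i t = 0} = (q i ⁻¹' {0})ᶜ := by ext x; simp
      rw [this]
      exact ((hmeas i hi).1 (measurableSet_singleton 0)).compl
    have hsub : {t : ℝ | ¬ q i t = 0} ∩ Set.Ioc (0:ℝ) T ⊆ {tm i} := by
      rintro t ⟨ht2, ht1⟩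
      have htI : t ∈ Set.Icc (0:ℝ) T := ⟨le_of_lt ht1.1, ht1.2⟩
      have hq0 : 0 < q i t := lt_of_le_of_ne ((hnn i hi t htI).1) (Ne.symm ht2)
      have hmem := (hwin i hi).2.1 ⟨htI, hq0⟩
      rw [← heqw] at hmem
      have : t = tm i := le_antisymm hmem.2 hmem.1
      exact this
    have h0 : (volume.restrict (Set.Ioc (0:ℝ) T)) {t : ℝ | ¬ q i t = 0} = 0 := by
      rw [Measure.restrict_apply hmeasset]
      exact measure_mono_null hsub (measure_singleton _)
    have hae : (q i) =ᵐ[volume.restrict (Set.Ioc (0:ℝ) T)] (fun _ => (0:ℝ)) :=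
      (MeasureTheory.ae_iff).mpr h0
    have h3 := hE3 i hi
    rw [intervalIntegral.integral_of_le hT.le,
      MeasureTheory.integral_congr_ae hae] at h3
    simp at h3
    linarith [(hdata i hi).2.1]
  -- inside the open window, s is strictly below ρ i - c i
  have hsint : ∀ i ∈ Finset.Icc 1 N, ∀ t ∈ Set.Ioo (tm i) (tp i), s t < ρ i - c i := by
    intro i hi t ht
    have ha : tm i ∈ Set.Icc (0:ℝ) T := hwsub i hi ⟨le_refl _, (hwin i hi).1⟩
    have hb : tp i ∈ Set.Icc (0:ℝ) T := hwsub i hi ⟨(hwin i hi).1, le_refl _⟩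
    have hab : tm i < tp i := hwlt i hi
    have hba : (0:ℝ) < tp i - tm i := by linarith
    have hne : tp i - tm i ≠ 0 := ne_of_gt hba
    have hl : (tp i - t)/(tp i - tm i) ∈ Set.Ioo (0:ℝ) 1 := by
      constructor
      · exact div_pos (by linarith [ht.2]) hba
      · rw [div_lt_one hba]; linarith [ht.1]
    have hrep : ((tp i - t)/(tp i - tm i)) * tm i
        + (1 - (tp i - t)/(tp i - tm i)) * tp i = t := by
      field_simp
      ring
    have hq := hqc (tm i) ha (tp i) hb (ne_of_lt hab) _ hl
    rw [hrep, (hreg i hi).1, (hreg i hi).2, max_self] at hq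
    exact hq
  -- main statement
  intro i hi
  obtain ⟨hi1, hiN⟩ := Finset.mem_Icc.mp hi
  constructor
  · intro t ht
    have htI : t ∈ Set.Icc (0:ℝ) T := hwsub i hi ⟨le_of_lt ht.1, le_of_lt ht.2⟩
    by_contra hp
    push_neg at hp
    have hpi0 : p i t = 0 := le_antisymm hp ((hnn i hi t htI).2)
    have hE1i := (hE1 i hi t htI).1
    have hst := hsint i hi t ht
    have hex : ∃ k ∈ Finset.Icc 1 i, 0 < p k t := by
      by_contra hno
      push_neg at hno
      have hsnp : ∑ j ∈ Finset.Icc 1 i, p j t ≤ 0 := Finset.sum_nonpos hno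
      linarith
    obtain ⟨k0, hk0, hk0p⟩ := hex
    have hFne : ((Finset.Icc 1 i).filter (fun k => 0 < p k t)).Nonempty :=
      ⟨k0, Finset.mem_filter.mpr ⟨hk0, hk0p⟩⟩
    set k := ((Finset.Icc 1 i).filter (fun k => 0 < p k t)).max' hFne with hkdef
    have hkF : k ∈ (Finset.Icc 1 i).filter (fun k => 0 < p k t) :=
      Finset.max'_mem _ hFne
    obtain ⟨hkmem, hkp⟩ := Finset.mem_filter.mp hkF
    obtain ⟨hk1, hki⟩ := Finset.mem_Icc.mp hkmem
    have hkne : k ≠ i := by intro h; rw [h] at hkp; linarith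
    have hklt : k < i := lt_of_le_of_ne hki hkne
    have hkN : k ∈ Finset.Icc 1 N := Finset.mem_Icc.mpr ⟨hk1, by omega⟩
    have hqk := hlemE k hkN t htI hkp
    have heqk := (hE1 k hkN t htI).2 hqk
    have hzero : ∀ m ∈ Finset.Ioc k i, p m t = 0 := by
      intro m hm
      obtain ⟨hm1, hm2⟩ := Finset.mem_Ioc.mp hm
      have hmI : m ∈ Finset.Icc 1 i := Finset.mem_Icc.mpr ⟨by omega, hm2⟩
      have hmN : m ∈ Finset.Icc 1 N := Finset.mem_Icc.mpr ⟨by omega, by omega⟩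
      by_contra hmne
      have hmp : 0 < p m t := lt_of_le_of_ne ((hnn m hmN t htI).2) (Ne.symm hmne)
      have hmF : m ∈ (Finset.Icc 1 i).filter (fun k => 0 < p k t) :=
        Finset.mem_filter.mpr ⟨hmI, hmp⟩
      have := Finset.le_max' _ m hmF
      omega
    have hsplit := sum_split' (fun j => p j t) (le_of_lt hklt)
    rw [Finset.sum_eq_zero hzero, add_zero] at hsplit
    have hchain := hsiglt k hk1 i (by omega) hiN
    rw [hsplit] at hE1i
    linarith
  · intro t htI hnotin
    rcases eq_or_lt_of_le ((hnn i hi t htI).2) with h | h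
    · exact h.symm
    · exact absurd ((hwin i hi).2.1 ⟨htI, hlemE i hi t htI h⟩) hnotin
end
end
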